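/- arXiv:2006.04172 — 8 statements merged into one kernel-verified Lean document; each statement's English description precedes it below -/
import Mathlib

section
/- Let n ≥ 2. For a chain I_1 ≤ I_2 ≤ … ≤ I_a of nonempty proper subsets of {1,…,n} (with respect to the partial order ≤, so that |I_1| ≥ |I_2| ≥ … ≥ |I_a|), associate the multiset of pairs { ((I_c)_j , j) : 1 ≤ c ≤ a, 1 ≤ j ≤ |I_c| }, where (I_c)_j denotes the j-th smallest element of I_c. Then this association is injective: two chains I_1 ≤ … ≤ I_a and J_1 ≤ … ≤ J_b with equal associated multisets satisfy a = b and I_c = J_c for all c. (Equivalently, different products of minors with comparable indices have different leading monomials ∏_{c,j} z_{(I_c)_j, j}.) -/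
open Finset
open scoped Classical

namespace Paper

/-- The value (as a natural number) of the `p`-th smallest element (0-based) of `I`;
junk value `0` out of range. -/
def elemV {n : ℕ} (I : Finset (Fin n)) (p : ℕ) : ℕ :=
  ((I.sort (· ≤ ·)).map Fin.val).getD p 0

/-- The `p`-th smallest element (0-based) of `I`; junk value out of range. -/
def elemF {n : ℕ} (hn : 0 < n) (I : Finset (Fin n)) (p : ℕ) : Fin n :=
  (I.sort (· ≤ ·)).getD p ⟨0, hn⟩

/-- The minor of `z` on the rows of `I` (in increasing order) and the first `I.card` columns. -/
noncomputable def fminor {R : Type*} [CommRing R] {n : ℕ} (z : Matrix (Fin n) (Fin n) R)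
    (I : Finset (Fin n)) : R :=
  if h : I.card ≤ n then
    Matrix.det (Matrix.of fun a b : Fin I.card => z (I.orderEmbOfFin rfl a) (Fin.castLE h b))
  else 0

/-- The minor of `z` whose rows are the elements of the multiset `L` (sorted increasingly,
with multiplicity) and whose columns are the first `L.card` columns.  If `L` has a repeated
element the corresponding determinant has two equal rows, hence it is `0`. -/
noncomputable def mminor {R : Type*} [CommRing R] {N : ℕ} (z : Matrix (Fin N) (Fin N) R)
    (L : Multiset (Fin N)) : R :=
  if h : (L.sort (· ≤ ·)).length ≤ N then
    Matrix.det (Matrix.of fun a b : Fin (L.sort (· ≤ ·)).length =>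
      z ((L.sort (· ≤ ·)).get a) (Fin.castLE h b))
  else 0

/-- `I ≤ J` iff `|I| ≥ |J|` and `i_s ≤ j_s` for all `s ≤ |J|` (0-based positions). -/
def finsetLE {n : ℕ} (I J : Finset (Fin n)) : Prop :=
  J.card ≤ I.card ∧ ∀ p < J.card, elemV I p ≤ elemV J p

/-- `J ≺ I` iff `|J| < |I|`, or `|J| = |I|` and the largest element of the symmetric
difference `I Δ J` belongs to `I`. -/
def prec {n : ℕ} (J I : Finset (Fin n)) : Prop :=
  J.card < I.card ∨ (J.card = I.card ∧
    ∃ x ∈ (I \ J) ∪ (J \ I), x ∈ I ∧ ∀ y ∈ (I \ J) ∪ (J \ I), y ≤ x)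

/-- `L` is a strictly decreasing list of (0-based) positions `< |J|` at which the
coordinatewise comparison of `I` and `J` alternates strictly, starting with `i > j`. -/
def altChain {n : ℕ} (I J : Finset (Fin n)) (L : List ℕ) : Prop :=
  L.Chain' (· > ·) ∧ (∀ p ∈ L, p < J.card) ∧
    ∀ t < L.length, if Even t then elemV J (L.getD t 0) < elemV I (L.getD t 0)
      else elemV I (L.getD t 0) < elemV J (L.getD t 0)

/-- `k(I,J)`: `0` for comparable pairs; otherwise the number of switch positions in the
coordinatewise comparison of `I` and `J` (the greedy top-down alternating count, equivalently
the longest strictly alternating subsequence starting with `i > j`). -/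
noncomputable def kNum {n : ℕ} (I J : Finset (Fin n)) : ℕ :=
  if finsetLE I J ∨ finsetLE J I then 0
  else
    letI := Classical.decPred fun m => ∃ L : List ℕ, L.length = m ∧ altChain I J L
    Nat.findGreatest (fun m => ∃ L : List ℕ, L.length = m ∧ altChain I J L) J.card

/-- The symmetrised `k(I,J) = k(J,I)`, computed in the orientation where the `≺`-larger
set plays the role of `I`. -/
noncomputable def kOf {n : ℕ} (I J : Finset (Fin n)) : ℕ :=
  if prec J I then kNum I J else kNum J I

/-- The sign of the permutation rearranging the increasing enumeration of `A` into the
concatenation (elements of `B` increasing, then elements of `A \ B` increasing). -/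
def signAsc {n : ℕ} (A B : Finset (Fin n)) : ℤ :=
  (-1) ^ (∑ b ∈ B, ((A \ B).filter (· < b)).card)

/-- The sign of the permutation rearranging the decreasing enumeration of `S` into the
concatenation (elements of `A` decreasing, then elements of `S \ A` decreasing). -/
def signDesc {n : ℕ} (S A : Finset (Fin n)) : ℤ :=
  (-1) ^ (∑ a ∈ A, ((S \ A).filter (a < ·)).card)

/-- The row (index) `l` of `{1,…,n}` inside `{1,1̄,…,n,n̄}` (0-based: `l ↦ 2l`). -/
def emb0 {n : ℕ} (l : Fin n) : Fin (2 * n) := ⟨2 * l.1, by have := l.2; omega⟩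

/-- The row (index) `l̄` inside `{1,1̄,…,n,n̄}` (0-based: `l̄ ↦ 2l+1`). -/
def emb1 {n : ℕ} (l : Fin n) : Fin (2 * n) := ⟨2 * l.1 + 1, by have := l.2; omega⟩

/-- `ε_{uv}`: `1` if `v = ū`, `-1` if `u = v̄`, `0` otherwise. -/
def eps {R : Type*} [CommRing R] {n : ℕ} (u v : Fin (2 * n)) : R :=
  if u.1 % 2 = 0 ∧ v.1 = u.1 + 1 then 1
  else if v.1 % 2 = 0 ∧ u.1 = v.1 + 1 then -1 else 0

/-- `J` is forbidden if `j_b = ā` for some `1 ≤ a < b ≤ |J|` (1-based positions; `ā` has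
0-based value `2a-1` in the ordering `1 < 1̄ < 2 < 2̄ < …`). -/
def Forbidden {N : ℕ} (J : Finset (Fin N)) : Prop :=
  ∃ a b : ℕ, 1 ≤ a ∧ a < b ∧ b ≤ J.card ∧ elemV J (b - 1) = 2 * a - 1

end Paper

/-
The pairs `(j, i_j)` coming from the first set `I` of a chain are the coordinatewise smallest of
the whole multiset: every later set `K` satisfies `I ≤ K`, so its `j`-th element is at least
`i_j` and it has no more elements than `I`. Hence `|I|` and every `i_j` can be read off the
multiset, and after removing the pairs of `I` one recurses on the rest of the chain.
-/

namespace Paper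

variable {n : ℕ}

/-- The pairs `(j, I_j)`, with 0-based `j`, of the leading monomial `∏_j z_{I_j, j}` of the minor
on the rows `I`. -/
def enumPairs (I : Finset (Fin n)) : Multiset (ℕ × Fin n) :=
  ((I.sort (· ≤ ·)).zipIdx.map Prod.swap : List (ℕ × Fin n))

def pairSum (L : List (Finset (Fin n))) : Multiset (ℕ × Fin n) :=
  (L.map enumPairs).sum

lemma elemV_eq_val_getElem {I : Finset (Fin n)} {p : ℕ} (hp : p < (I.sort (· ≤ ·)).length) :
    elemV I p = (I.sort (· ≤ ·))[p].val := by
  simp [elemV, List.getElem?_eq_getElem hp]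

lemma mem_enumPairs_iff {I : Finset (Fin n)} {j : ℕ} {x : Fin n} :
    (j, x) ∈ enumPairs I ↔ j < #I ∧ elemV I j = x.val := by
  simp only [enumPairs, Multiset.mem_coe, List.mem_map, Prod.exists, Prod.swap_prod_mk,
    Prod.mk.injEq, List.mk_mem_zipIdx_iff_getElem?, List.getElem?_eq_some_iff]
  constructor
  · rintro ⟨_, _, ⟨hj, rfl⟩, rfl, rfl⟩
    exact ⟨by simpa using hj, elemV_eq_val_getElem hj⟩
  · rintro ⟨hj, hx⟩
    have hj' : j < (I.sort (· ≤ ·)).length := by simpa using hj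
    exact ⟨x, j, ⟨hj', Fin.ext (elemV_eq_val_getElem hj' ▸ hx)⟩, rfl, rfl⟩

lemma mem_pairSum_iff {L : List (Finset (Fin n))} {a : ℕ × Fin n} :
    a ∈ pairSum L ↔ ∃ K ∈ L, a ∈ enumPairs K := by
  induction L with
  | nil => simp [pairSum]
  | cons I L ih => simp [pairSum, ← ih]

lemma pairSum_cons (I : Finset (Fin n)) (L : List (Finset (Fin n))) :
    pairSum (I :: L) = enumPairs I + pairSum L := by
  simp [pairSum]

lemma elemV_mem_pairSum {L : List (Finset (Fin n))} {I : Finset (Fin n)} (hI : I ∈ L)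
    {j : ℕ} (hj : j < #I) : ∃ x : Fin n, (j, x) ∈ pairSum L ∧ x.val = elemV I j := by
  have hj' : j < (I.sort (· ≤ ·)).length := by simpa using hj
  exact ⟨_, mem_pairSum_iff.mpr ⟨I, hI, mem_enumPairs_iff.mpr ⟨hj, elemV_eq_val_getElem hj'⟩⟩,
    (elemV_eq_val_getElem hj').symm⟩

lemma finsetLE_refl (I : Finset (Fin n)) : finsetLE I I :=
  ⟨le_rfl, fun _ _ => le_rfl⟩

lemma finsetLE_trans {I J K : Finset (Fin n)} (hIJ : finsetLE I J) (hJK : finsetLE J K) :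
    finsetLE I K :=
  ⟨hJK.1.trans hIJ.1, fun p hp => (hIJ.2 p (hp.trans_le hJK.1)).trans (hJK.2 p hp)⟩

instance : Trans (finsetLE (n := n)) finsetLE finsetLE := ⟨finsetLE_trans⟩

lemma finsetLE_of_chain_cons {I : Finset (Fin n)} {T : List (Finset (Fin n))}
    (hc : List.IsChain finsetLE (I :: T)) : ∀ K ∈ I :: T, finsetLE I K := by
  have hpw := List.pairwise_cons.mp (List.isChain_iff_pairwise.mp hc)
  rintro K (_ | ⟨_, hK⟩)
  exacts [finsetLE_refl I, hpw.1 K hK]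

lemma le_of_mem_pairSum {L : List (Finset (Fin n))} {I : Finset (Fin n)}
    (hI : ∀ K ∈ L, finsetLE I K) {j : ℕ} {x : Fin n} (hx : (j, x) ∈ pairSum L) :
    j < #I ∧ elemV I j ≤ x.val := by
  obtain ⟨K, hK, hjx⟩ := mem_pairSum_iff.mp hx
  obtain ⟨hj, hxK⟩ := mem_enumPairs_iff.mp hjx
  exact ⟨hj.trans_le (hI K hK).1, hxK ▸ (hI K hK).2 j hj⟩

lemma finsetLE_antisymm {I J : Finset (Fin n)} (hIJ : finsetLE I J) (hJI : finsetLE J I) :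
    I = J := by
  have hcard : #I = #J := le_antisymm hJI.1 hIJ.1
  have hsort : I.sort (· ≤ ·) = J.sort (· ≤ ·) := by
    refine List.ext_getElem (by simpa using hcard) fun p hpI hpJ => Fin.ext ?_
    rw [← elemV_eq_val_getElem, ← elemV_eq_val_getElem]
    exact le_antisymm (hIJ.2 p (by simpa using hpJ)) (hJI.2 p (by simpa using hpI))
  rw [← Finset.sort_toFinset I (· ≤ ·), hsort, Finset.sort_toFinset]

lemma finsetLE_of_pairSum_eq {L M : List (Finset (Fin n))} {I J : Finset (Fin n)}
    (hI : I ∈ L) (hJM : ∀ K ∈ M, finsetLE J K) (h : pairSum L = pairSum M) : finsetLE J I := by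
  have hpair : ∀ j < #I, j < #J ∧ elemV J j ≤ elemV I j := fun j hj => by
    obtain ⟨x, hx, hxI⟩ := elemV_mem_pairSum hI hj
    exact hxI ▸ le_of_mem_pairSum hJM (h ▸ hx)
  exact ⟨le_of_forall_lt fun j hj => (hpair j hj).1, fun j hj => (hpair j hj).2⟩

lemma pairSum_ne_zero {L : List (Finset (Fin n))} {I : Finset (Fin n)} (hI : I ∈ L)
    (hne : I.Nonempty) : pairSum L ≠ 0 := by
  obtain ⟨x, hx, -⟩ := elemV_mem_pairSum hI (card_pos.mpr hne)
  exact fun h0 => Multiset.notMem_zero _ (h0 ▸ hx)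

theorem chain_injective_of_multiset_pairs_general (n : ℕ)
    (L M : List (Finset (Fin n)))
    (hLchain : List.Chain' finsetLE L) (hLmem : ∀ I ∈ L, I.Nonempty ∧ I ≠ Finset.univ)
    (hMchain : List.Chain' finsetLE M) (hMmem : ∀ I ∈ M, I.Nonempty ∧ I ≠ Finset.univ)
    (h : (L.map fun I => (((I.sort (· ≤ ·)).zipIdx.map Prod.swap) : Multiset (ℕ × Fin n))).sum
       = (M.map fun I => (((I.sort (· ≤ ·)).zipIdx.map Prod.swap) : Multiset (ℕ × Fin n))).sum) :
    L = M := by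
  change pairSum L = pairSum M at h
  induction L generalizing M with
  | nil =>
    cases M with
    | nil => rfl
    | cons J U =>
      exact absurd h.symm (pairSum_ne_zero List.mem_cons_self (hMmem J List.mem_cons_self).1)
  | cons I T ih =>
    cases M with
    | nil => exact absurd h (pairSum_ne_zero List.mem_cons_self (hLmem I List.mem_cons_self).1)
    | cons J U =>
      obtain rfl : I = J := finsetLE_antisymm
        (finsetLE_of_pairSum_eq List.mem_cons_self (finsetLE_of_chain_cons hLchain) h.symm)
        (finsetLE_of_pairSum_eq List.mem_cons_self (finsetLE_of_chain_cons hMchain) h)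
      rw [pairSum_cons, pairSum_cons] at h
      rw [ih U hLchain.tail (fun K hK => hLmem K (List.mem_cons_of_mem I hK)) hMchain.tail
        (fun K hK => hMmem K (List.mem_cons_of_mem I hK)) (add_left_cancel h)]

/-- a chain of nonempty proper subsets is determined by the multiset of
pairs (element, column position) of its associated leading monomial. -/
theorem chain_injective_of_multiset_pairs (n : ℕ) (hn : 2 ≤ n)
    (L M : List (Finset (Fin n)))
    (hLchain : List.Chain' finsetLE L) (hLmem : ∀ I ∈ L, I.Nonempty ∧ I ≠ Finset.univ)
    (hMchain : List.Chain' finsetLE M) (hMmem : ∀ I ∈ M, I.Nonempty ∧ I ≠ Finset.univ)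
    (h : (L.map fun I => (((I.sort (· ≤ ·)).zipIdx.map Prod.swap) : Multiset (ℕ × Fin n))).sum
       = (M.map fun I => (((I.sort (· ≤ ·)).zipIdx.map Prod.swap) : Multiset (ℕ × Fin n))).sum) :
    L = M :=
  chain_injective_of_multiset_pairs_general n L M hLchain hLmem hMchain hMmem h

end Paper
end

section
/- Let k be a field and n ≥ 2. In the quotient ring k[SL_n] = k[z_{uv} : 1 ≤ u,v ≤ n]/⟨det(z)−1⟩, the images of the products of minors m_{I_1}·m_{I_2}···m_{I_a}, taken over all chains I_1 ≤ I_2 ≤ … ≤ I_a of nonempty proper subsets of {1,…,n} (including the empty product 1), are linearly independent over k. -/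
open Finset
open scoped Classical

namespace Paper

/-- The generic `n × n` matrix, with entries the variables of a polynomial ring. -/
noncomputable def genMat (k : Type*) [CommSemiring k] (n : ℕ) :
    Matrix (Fin n) (Fin n) (MvPolynomial (Fin n × Fin n) k) :=
  Matrix.of fun u v => MvPolynomial.X (u, v)

end Paper

/-!
Order monomials lexicographically, the variables `z_{uv}` being ordered lexicographically by
(row, column). The leading monomial of the minor `m_I` is its diagonal `z_{i_1 1} ⋯ z_{i_m m}`,
with coefficient `1`, so the leading monomial of a product along a chain is the product of these
diagonals. From it the chain can be read off: the first set has as many elements as there are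
occupied columns, and its entry in column `v` is the least row occupied in that column, because
along a chain the entries increase. Distinct chains thus have distinct leading monomials, and the
products are linearly independent in `k[z]`.

They stay independent modulo `det z - 1` because no proper minor involves the last column. Under
`z_{un} ↦ T z_{un}` every element of their span is left unchanged (degree `0` in `T`), whereas a
nonzero multiple of `det z - 1` becomes a multiple of `T det z - 1`, of positive degree in `T`.
-/

open MvPolynomial
open scoped MonomialOrder

namespace MonomialOrder

variable {σ τ : Type*}

noncomputable def comapEquiv (m : MonomialOrder τ) (e : σ ≃ τ) : MonomialOrder σ where
  syn := m.syn
  toSyn := (Finsupp.domCongr e).trans m.toSyn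
  toSyn_monotone a b h := m.toSyn_monotone (show Finsupp.domCongr e a ≤ Finsupp.domCongr e b from
    fun x => by
      simpa only [Finsupp.domCongr_apply, Finsupp.equivMapDomain_apply] using h (e.symm x))

variable (σ τ) in
noncomputable def prodLex [LinearOrder σ] [LinearOrder τ] [Finite σ] [Finite τ] :
    MonomialOrder (σ × τ) :=
  have : Finite (σ ×ₗ τ) := inferInstanceAs (Finite (σ × τ))
  (lex : MonomialOrder (σ ×ₗ τ)).comapEquiv toLex

theorem prodLex_lt_iff [LinearOrder σ] [LinearOrder τ] [Finite σ] [Finite τ]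
    {c d : σ × τ →₀ ℕ} :
    c ≺[prodLex σ τ] d ↔
      ∃ p : σ × τ, (∀ q, toLex q < toLex p → c q = d q) ∧ c p < d p := by
  show toLex (Finsupp.domCongr toLex c) < toLex (Finsupp.domCongr toLex d) ↔ _
  rw [Finsupp.Lex.lt_iff]
  simp [Finsupp.domCongr_apply, Finsupp.equivMapDomain_apply]

variable {m : MonomialOrder σ} {R : Type*}

theorem Monic.sum_and_degree_of_degree_lt [CommSemiring R] {α : Type*} {s : Finset α}
    {f : α → MvPolynomial σ R} {i : α} (hi : i ∈ s) (hf : m.Monic (f i))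
    (hlt : ∀ j ∈ s, j ≠ i → m.degree (f j) ≺[m] m.degree (f i)) :
    m.Monic (∑ j ∈ s, f j) ∧ m.degree (∑ j ∈ s, f j) = m.degree (f i) := by
  rw [← Finset.add_sum_erase s f hi]
  rcases (s.erase i).eq_empty_or_nonempty with he | ⟨j, hj⟩
  · rw [he, Finset.sum_empty, add_zero]
    exact ⟨hf, rfl⟩
  have hrest : m.degree (∑ j ∈ s.erase i, f j) ≺[m] m.degree (f i) := by
    have hpos : ⊥ < m.toSyn (m.degree (f i)) :=
      bot_le.trans_lt (hlt j (Finset.mem_of_mem_erase hj) (Finset.ne_of_mem_erase hj))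
    exact degree_sum_le.trans_lt <| (Finset.sup_lt_iff hpos).mpr fun j hj =>
      hlt j (Finset.mem_of_mem_erase hj) (Finset.ne_of_mem_erase hj)
  exact ⟨hf.add_of_lt hrest, degree_add_of_lt hrest⟩

theorem linearIndependent_of_monic_of_degree_injective [CommRing R] {ι : Type*}
    {f : ι → MvPolynomial σ R} (hf : ∀ i, m.Monic (f i))
    (hd : Function.Injective (m.degree ∘ f)) :
    LinearIndependent R f := by
  rw [linearIndependent_iff']
  intro s g hsum i hi
  by_contra hgi
  -- compare coefficients at the largest degree carrying a nonzero scalar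
  obtain ⟨j, hj, hmax⟩ := (s.filter (g · ≠ 0)).exists_max_image
    (fun j => m.toSyn (m.degree (f j))) ⟨i, Finset.mem_filter.mpr ⟨hi, hgi⟩⟩
  rw [Finset.mem_filter] at hj
  have hcoeff := congrArg (coeff (m.degree (f j))) hsum
  rw [coeff_sum, coeff_zero, Finset.sum_eq_single_of_mem j hj.1] at hcoeff
  · rw [coeff_smul, (hf j).coeff_degree, smul_eq_mul, mul_one] at hcoeff
    exact hj.2 hcoeff
  intro x hx hxj
  rw [coeff_smul]
  by_cases hgx : g x = 0
  · rw [hgx, zero_smul]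
  have hlt : m.degree (f x) ≺[m] m.degree (f j) :=
    (hmax x (Finset.mem_filter.mpr ⟨hx, hgx⟩)).lt_of_ne fun h => hxj (hd (m.toSyn.injective h))
  rw [coeff_eq_zero_of_lt hlt, smul_zero]

end MonomialOrder

namespace Matrix

open MonomialOrder

variable {ι κ : Type*} {m : ℕ}

noncomputable def diagExponent (r : Fin m → ι) (c : Fin m → κ) : ι × κ →₀ ℕ :=
  ∑ b, Finsupp.single (r b, c b) 1

theorem diagExponent_apply [DecidableEq ι] [DecidableEq κ] (r : Fin m → ι) (c : Fin m → κ)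
    (p : ι × κ) : diagExponent r c p = #{b | (r b, c b) = p} := by
  simp [diagExponent, Finsupp.finsetSum_apply, Finsupp.single_apply]

variable (R : Type*) [CommRing R]

theorem det_submatrix_mvPolynomialX (r : Fin m → ι) (c : Fin m → κ) :
    ((mvPolynomialX ι κ R).submatrix r c).det =
      ∑ π : Equiv.Perm (Fin m),
        monomial (diagExponent (r ∘ π) c) (Equiv.Perm.sign π : R) := by
  rw [det_apply]
  refine Finset.sum_congr rfl fun π _ => ?_
  simp only [submatrix_apply, mvPolynomialX_apply, X]
  rw [← monomial_sum_one, Units.smul_def, smul_monomial, zsmul_one]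
  rfl

variable [LinearOrder ι] [LinearOrder κ] [Finite ι] [Finite κ]

theorem diagExponent_comp_perm_lt {r : Fin m → ι} {c : Fin m → κ} (hr : StrictMono r)
    (hc : StrictMono c) {π : Equiv.Perm (Fin m)} (hπ : π ≠ 1) :
    diagExponent (r ∘ π) c ≺[prodLex ι κ] diagExponent r c := by
  obtain ⟨s, hs, hmin⟩ := WellFounded.has_min wellFounded_lt {b | π b ≠ b}
    (not_forall.mp fun h => hπ (Equiv.ext h))
  have hfix : ∀ b < s, π b = b := fun b hb => not_not.mp fun h => hmin b h hb
  have hge : ∀ b, s ≤ b → s ≤ π b := fun b hb => le_of_not_gt fun h =>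
    (π.injective (hfix _ h) ▸ h).not_ge hb
  -- the two exponents first differ at the variable `(r s, c s)`
  rw [prodLex_lt_iff]
  refine ⟨(r s, c s), fun q hq => ?_, ?_⟩
  · rw [diagExponent_apply, diagExponent_apply]
    congr 1
    refine Finset.filter_congr fun b _ => ?_
    rcases lt_or_ge b s with hb | hb
    · rw [Function.comp_apply, hfix b hb]
    have hne : ∀ x, r s ≤ x → (x, c b) ≠ q := fun x hx h =>
      (hq.trans_le (Prod.Lex.toLex_mono (show (r s, c s) ≤ (x, c b) from
        ⟨hx, hc.monotone hb⟩))).ne (congrArg toLex h.symm)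
    exact iff_of_false (hne _ (hr.monotone (hge b hb))) (hne _ (hr.monotone hb))
  · rw [diagExponent_apply, diagExponent_apply, Finset.card_eq_zero.mpr, Finset.card_pos]
    · exact ⟨s, by simp⟩
    · refine Finset.filter_eq_empty_iff.mpr fun b _ h => ?_
      obtain rfl := hc.injective (congrArg Prod.snd h)
      exact hs (hr.injective (congrArg Prod.fst h))

theorem monic_and_degree_det_submatrix_mvPolynomialX [Nontrivial R] {r : Fin m → ι}
    {c : Fin m → κ} (hr : StrictMono r) (hc : StrictMono c) :
    (prodLex ι κ).Monic ((mvPolynomialX ι κ R).submatrix r c).det ∧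
      (prodLex ι κ).degree ((mvPolynomialX ι κ R).submatrix r c).det = diagExponent r c := by
  have hdeg : (prodLex ι κ).degree (monomial (diagExponent (r ∘ ⇑(1 : Equiv.Perm (Fin m))) c)
      (Equiv.Perm.sign (1 : Equiv.Perm (Fin m)) : R)) = diagExponent r c := by
    simp [degree_monomial]
  rw [det_submatrix_mvPolynomialX, ← hdeg]
  refine Monic.sum_and_degree_of_degree_lt (Finset.mem_univ 1) (by simp) fun π _ hπ => ?_
  rw [hdeg]
  exact (degree_monomial_le _).trans_lt (diagExponent_comp_perm_lt hr hc hπ)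

end Matrix

namespace MvPolynomial

open Matrix

variable {ι κ R : Type*} [CommRing R]

noncomputable def columnScaling (w : κ → ℕ) :
    MvPolynomial (ι × κ) R →ₐ[R] Polynomial (MvPolynomial (ι × κ) R) :=
  aeval fun p => Polynomial.C (X p) * Polynomial.X ^ w p.2

theorem columnScaling_det [Fintype ι] [DecidableEq ι] (w : ι → ℕ) :
    columnScaling w (mvPolynomialX ι ι R).det =
      Polynomial.C (mvPolynomialX ι ι R).det * Polynomial.X ^ ∑ v, w v := by
  have hmat : (columnScaling w).mapMatrix (mvPolynomialX ι ι R) =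
      (mvPolynomialX ι ι R).map Polynomial.C * diagonal fun v => Polynomial.X ^ w v := by
    ext u v
    simp [columnScaling]
  rw [AlgHom.map_det, hmat, det_mul, det_diagonal, Finset.prod_pow_eq_pow_sum, RingHom.map_det]
  rfl

theorem columnScaling_det_submatrix {m : ℕ} {w : κ → ℕ} (r : Fin m → ι) {c : Fin m → κ}
    (hc : ∀ b, w (c b) = 0) :
    columnScaling w ((mvPolynomialX ι κ R).submatrix r c).det =
      Polynomial.C ((mvPolynomialX ι κ R).submatrix r c).det := by
  have hmat : (columnScaling w).mapMatrix ((mvPolynomialX ι κ R).submatrix r c) =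
      ((mvPolynomialX ι κ R).submatrix r c).map Polynomial.C := by
    ext a b
    simp [columnScaling, hc]
  rw [AlgHom.map_det, hmat, RingHom.map_det]
  rfl

end MvPolynomial

theorem eq_zero_of_mem_span_sub_one {A F : Type*} [CommRing A] [IsDomain A]
    [FunLike F A (Polynomial A)] [RingHomClass F A (Polynomial A)] (φ : F) {d f : A} (hd : d ≠ 0)
    (hφd : φ d = Polynomial.C d * Polynomial.X) (hφf : φ f = Polynomial.C f)
    (hf : f ∈ Ideal.span {d - 1}) : f = 0 := by
  obtain ⟨q, rfl⟩ := Ideal.mem_span_singleton'.mp hf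
  have hφ : φ q * (Polynomial.C d * Polynomial.X - 1) = Polynomial.C (q * (d - 1)) := by
    rw [← hφf, map_mul, map_sub, map_one, hφd]
  by_contra hne
  have hq : φ q ≠ 0 := by
    rintro h
    rw [h, zero_mul, eq_comm, Polynomial.C_eq_zero] at hφ
    exact hne hφ
  have hlin : (Polynomial.C d * Polynomial.X - 1).natDegree = 1 := by
    rw [← Polynomial.C_1, Polynomial.natDegree_sub_C, Polynomial.natDegree_C_mul_X d hd]
  have hdeg := congrArg Polynomial.natDegree hφ
  rw [Polynomial.natDegree_mul hq (Polynomial.ne_zero_of_natDegree_gt (hlin ▸ zero_lt_one)),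
    hlin, Polynomial.natDegree_C] at hdeg
  omega

namespace Paper

open MvPolynomial MonomialOrder Matrix

variable {n : ℕ}

theorem fminor_genMat (k : Type*) [CommRing k] (I : Finset (Fin n)) :
    fminor (genMat k n) I = ((mvPolynomialX (Fin n) (Fin n) k).submatrix
      (I.orderEmbOfFin rfl) (Fin.castLE (card_finset_fin_le I))).det := by
  rw [fminor, dif_pos (card_finset_fin_le I)]
  rfl

noncomputable def minorExponent (I : Finset (Fin n)) : Fin n × Fin n →₀ ℕ :=
  diagExponent (I.orderEmbOfFin rfl) (Fin.castLE (card_finset_fin_le I))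

noncomputable def chainExponent (L : List (Finset (Fin n))) : Fin n × Fin n →₀ ℕ :=
  (L.map minorExponent).sum

noncomputable def chainProduct (k : Type*) [CommRing k] (L : List (Finset (Fin n))) :
    MvPolynomial (Fin n × Fin n) k :=
  (L.map fun I => fminor (genMat k n) I).prod

theorem monic_and_degree_chainProduct (k : Type*) [CommRing k] [Nontrivial k]
    (L : List (Finset (Fin n))) :
    (prodLex (Fin n) (Fin n)).Monic (chainProduct k L) ∧
      (prodLex (Fin n) (Fin n)).degree (chainProduct k L) = chainExponent L := by
  induction L with
  | nil => simp [chainProduct, chainExponent]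
  | cons I T ih =>
    obtain ⟨hI, hdI⟩ := monic_and_degree_det_submatrix_mvPolynomialX k
      (I.orderEmbOfFin rfl).strictMono (Fin.strictMono_castLE (card_finset_fin_le I))
    rw [← fminor_genMat] at hI hdI
    simp only [chainProduct, List.map_cons, List.prod_cons] at ih ⊢
    refine ⟨hI.mul ih.1, ?_⟩
    rw [degree_mul_of_mul_leadingCoeff_ne_zero (by simp [hI.leadingCoeff_eq_one,
      ih.1.leadingCoeff_eq_one]), hdI, ih.2]
    simp [chainExponent, minorExponent]

theorem elemV_eq_orderEmbOfFin (I : Finset (Fin n)) {p : ℕ} (hp : p < #I) :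
    elemV I p = I.orderEmbOfFin rfl ⟨p, hp⟩ := by
  rw [elemV, List.getD_eq_getElem _ _ (by simpa using hp), List.getElem_map,
    Finset.orderEmbOfFin_apply]
  rfl

theorem eq_of_elemV_eq {I J : Finset (Fin n)} (hcard : #I = #J)
    (h : ∀ p < #I, elemV I p = elemV J p) : I = J := by
  have hsort : (I.sort (· ≤ ·)).map Fin.val = (J.sort (· ≤ ·)).map Fin.val := by
    refine List.ext_getElem (by simp [hcard]) fun p hI hJ => ?_
    have := h p (by simpa using hI)
    rwa [elemV, elemV, List.getD_eq_getElem _ _ hI, List.getD_eq_getElem _ _ hJ] at this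
  rw [← I.sort_toFinset (· ≤ ·), ← J.sort_toFinset (· ≤ ·),
    List.map_injective_iff.mpr Fin.val_injective hsort]

theorem minorExponent_ne_zero_iff (I : Finset (Fin n)) (u v : Fin n) :
    minorExponent I (u, v) ≠ 0 ↔ v.val < #I ∧ elemV I v = u := by
  rw [minorExponent, diagExponent_apply, Finset.card_ne_zero, Finset.filter_nonempty_iff]
  constructor
  · rintro ⟨b, -, hb⟩
    obtain ⟨rfl, rfl⟩ := Prod.mk.inj hb
    exact ⟨b.2, elemV_eq_orderEmbOfFin I b.2⟩
  · rintro ⟨hv, he⟩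
    refine ⟨⟨v, hv⟩, Finset.mem_univ _, ?_⟩
    rw [elemV_eq_orderEmbOfFin I hv] at he
    exact Prod.ext (Fin.ext he) rfl

theorem chainExponent_ne_zero_iff (L : List (Finset (Fin n))) (u v : Fin n) :
    chainExponent L (u, v) ≠ 0 ↔ ∃ I ∈ L, v.val < #I ∧ elemV I v = u := by
  induction L with
  | nil => simp [chainExponent]
  | cons I T ih =>
    simp only [chainExponent, List.map_cons, List.sum_cons, Finsupp.add_apply] at ih ⊢
    rw [Ne, Nat.add_eq_zero_iff, not_and_or, ← Ne, ← Ne, minorExponent_ne_zero_iff, ih]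
    simp

theorem chainExponent_cons (I : Finset (Fin n)) (T : List (Finset (Fin n))) :
    chainExponent (I :: T) = minorExponent I + chainExponent T := by
  simp [chainExponent]

theorem chainExponent_cons_apply_ne_zero {I : Finset (Fin n)} (T : List (Finset (Fin n)))
    {p : ℕ} (hp : p < #I) :
    chainExponent (I :: T)
      (I.orderEmbOfFin rfl ⟨p, hp⟩, ⟨p, hp.trans_le (card_finset_fin_le I)⟩) ≠ 0 :=
  (chainExponent_ne_zero_iff _ _ _).mpr ⟨I, List.mem_cons_self, hp, elemV_eq_orderEmbOfFin I hp⟩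

theorem chainExponent_cons_ne_zero {I : Finset (Fin n)} (T : List (Finset (Fin n)))
    (hI : I.Nonempty) : chainExponent (I :: T) ≠ 0 := fun h => by
  simpa [h] using chainExponent_cons_apply_ne_zero T (Finset.card_pos.mpr hI)

instance inst_s4 : Trans (finsetLE (n := n)) finsetLE finsetLE where
  trans := fun ⟨h₁, h₂⟩ ⟨h₃, h₄⟩ =>
    ⟨h₃.trans h₁, fun p hp => (h₂ p (hp.trans_le h₃)).trans (h₄ p hp)⟩

variable {I J I' : Finset (Fin n)} {T T' : List (Finset (Fin n))}

theorem finsetLE_of_mem_of_isChain (hch : (I :: T).IsChain finsetLE) (hJ : J ∈ I :: T) :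
    finsetLE I J := by
  rcases List.mem_cons.mp hJ with rfl | hJ
  · exact ⟨le_rfl, fun _ _ => le_rfl⟩
  · exact List.rel_of_pairwise_cons hch.pairwise hJ

theorem lt_card_iff_of_isChain (hch : (I :: T).IsChain finsetLE) (v : Fin n) :
    v.val < #I ↔ ∃ u, chainExponent (I :: T) (u, v) ≠ 0 := by
  refine ⟨fun hv => ⟨_, chainExponent_cons_apply_ne_zero T hv⟩, fun ⟨u, hu⟩ => ?_⟩
  obtain ⟨J, hJ, hvJ, -⟩ := (chainExponent_ne_zero_iff _ _ _).mp hu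
  exact hvJ.trans_le (finsetLE_of_mem_of_isChain hch hJ).1

theorem elemV_le_of_isChain (hch : (I :: T).IsChain finsetLE) {u v : Fin n}
    (hu : chainExponent (I :: T) (u, v) ≠ 0) : elemV I v ≤ u := by
  obtain ⟨J, hJ, hvJ, hJu⟩ := (chainExponent_ne_zero_iff _ _ _).mp hu
  exact hJu ▸ (finsetLE_of_mem_of_isChain hch hJ).2 v hvJ

theorem elemV_le_of_chainExponent_eq (hch : (I :: T).IsChain finsetLE)
    (h : chainExponent (I :: T) = chainExponent (I' :: T')) {p : ℕ} (hp : p < #I') :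
    elemV I p ≤ elemV I' p := by
  have hu := chainExponent_cons_apply_ne_zero T' hp
  rw [← h] at hu
  exact (elemV_le_of_isChain hch hu).trans_eq (elemV_eq_orderEmbOfFin I' hp).symm

theorem head_eq_of_chainExponent_eq (hch : (I :: T).IsChain finsetLE)
    (hch' : (I' :: T').IsChain finsetLE)
    (h : chainExponent (I :: T) = chainExponent (I' :: T')) : I = I' := by
  have hcol : ∀ v : Fin n, v.val < #I ↔ v.val < #I' := fun v => by
    rw [lt_card_iff_of_isChain hch, lt_card_iff_of_isChain hch', h]
  have hcard : #I = #I' := by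
    by_contra hne
    rcases Nat.lt_or_gt_of_ne hne with hlt | hlt
    · exact lt_irrefl _ ((hcol ⟨#I, hlt.trans_le (card_finset_fin_le I')⟩).mpr hlt)
    · exact lt_irrefl _ ((hcol ⟨#I', hlt.trans_le (card_finset_fin_le I)⟩).mp hlt)
  exact eq_of_elemV_eq hcard fun p hp => le_antisymm
    (elemV_le_of_chainExponent_eq hch h (hcard ▸ hp))
    (elemV_le_of_chainExponent_eq hch' h.symm hp)

theorem chainExponent_injOn :
    Set.InjOn chainExponent
      {L : List (Finset (Fin n)) | L.IsChain finsetLE ∧ ∀ I ∈ L, I.Nonempty} := by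
  intro L hL L' hL' h
  induction L generalizing L' with
  | nil =>
    cases L' with
    | nil => rfl
    | cons I' T' =>
      exact absurd h.symm (chainExponent_cons_ne_zero T' (hL'.2 I' List.mem_cons_self))
  | cons I T ih =>
    cases L' with
    | nil => exact absurd h (chainExponent_cons_ne_zero T (hL.2 I List.mem_cons_self))
    | cons I' T' =>
      obtain rfl := head_eq_of_chainExponent_eq hL.1 hL'.1 h
      rw [chainExponent_cons, chainExponent_cons] at h
      exact congrArg (I :: ·) (ih ⟨hL.1.tail, fun J hJ => hL.2 J (List.mem_cons_of_mem _ hJ)⟩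
        ⟨hL'.1.tail, fun J hJ => hL'.2 J (List.mem_cons_of_mem _ hJ)⟩ (add_left_cancel h))

def lastColumnWeight (n : ℕ) (v : Fin n) : ℕ :=
  if v.val + 1 = n then 1 else 0

theorem columnScaling_det_genMat (k : Type*) [CommRing k] (hn : 0 < n) :
    columnScaling (lastColumnWeight n) (genMat k n).det =
      Polynomial.C (genMat k n).det * Polynomial.X := by
  have hw : ∑ v, lastColumnWeight n v = 1 := by
    obtain ⟨m, rfl⟩ := Nat.exists_eq_succ_of_ne_zero hn.ne'
    rw [Fin.sum_univ_castSucc]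
    simp [lastColumnWeight, Fin.is_lt, Nat.ne_of_lt]
  rw [genMat, ← mvPolynomialX, columnScaling_det, hw, pow_one]

theorem columnScaling_chainProduct (k : Type*) [CommRing k] {L : List (Finset (Fin n))}
    (hL : ∀ I ∈ L, I ≠ Finset.univ) :
    columnScaling (lastColumnWeight n) (chainProduct k L) = Polynomial.C (chainProduct k L) := by
  refine Subalgebra.list_prod_mem (AlgHom.equalizer _ Polynomial.CAlgHom) fun F hF => ?_
  obtain ⟨I, hI, rfl⟩ := List.mem_map.mp hF
  have hcard : #I < n := by
    simpa using (Finset.card_lt_iff_ne_univ I).mpr (hL I hI)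
  rw [AlgHom.mem_equalizer, fminor_genMat]
  exact columnScaling_det_submatrix _ fun b => if_neg (by simp; omega)

/-- in `k[SL_n]` the products of minors along chains of nonempty proper
subsets (including the empty product `1`) are linearly independent. -/
theorem chain_products_linearIndependent (k : Type*) [Field k] (n : ℕ) (hn : 2 ≤ n) :
    LinearIndependent k
      (fun L : {L : List (Finset (Fin n)) // List.Chain' finsetLE L ∧
          ∀ I ∈ L, I.Nonempty ∧ I ≠ Finset.univ} =>
        Ideal.Quotient.mk (Ideal.span {(genMat k n).det - 1})
          ((L.1.map fun I => fminor (genMat k n) I).prod)) := by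
  have hindep : LinearIndependent k fun L : {L : List (Finset (Fin n)) //
      L.IsChain finsetLE ∧ ∀ I ∈ L, I.Nonempty ∧ I ≠ Finset.univ} =>
        chainProduct k L.1 := by
    refine linearIndependent_of_monic_of_degree_injective
      (fun L => (monic_and_degree_chainProduct k L.1).1) fun L L' h => Subtype.ext ?_
    simp only [Function.comp_apply, (monic_and_degree_chainProduct k _).2] at h
    exact chainExponent_injOn ⟨L.2.1, fun I hI => (L.2.2 I hI).1⟩
      ⟨L'.2.1, fun I hI => (L'.2.2 I hI).1⟩ h
  refine hindep.map (f := (Ideal.Quotient.mkₐ k _).toLinearMap)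
    (Submodule.disjoint_def.mpr fun F hF hker => ?_)
  have hfixed : F ∈ (AlgHom.equalizer (columnScaling (lastColumnWeight n))
      Polynomial.CAlgHom).toSubmodule := by
    refine Submodule.span_le.mpr ?_ hF
    rintro _ ⟨L, rfl⟩
    exact columnScaling_chainProduct k fun I hI => (L.2.2 I hI).2
  exact eq_zero_of_mem_span_sub_one (columnScaling (lastColumnWeight n))
    (det_mvPolynomialX_ne_zero (Fin n) k) (columnScaling_det_genMat k (by omega)) hfixed
    (Ideal.Quotient.eq_zero_iff_mem.mp hker)

end Paper
end

section
/- Let s ≥ 1 and let X be a set with 2s+1 elements. Consider the square matrix M over ℚ whose rows are indexed by the s-element subsets B of X, whose columns are indexed by the (s+1)-element subsets A of X (note C(2s+1,s) = C(2s+1,s+1)), and whose entry M_{B,A} is 1 if B ⊆ A and 0 otherwise. Then M is invertible. -/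
namespace Paper

open Finset

lemma expand_sq {α β : Type*} [DecidableEq β] (S : Finset α) (Q : Finset β)
    (r : α → β → Prop) [∀ x y, Decidable (r x y)] (v : β → ℚ) :
    ∑ x ∈ S, (∑ y ∈ Q, if r x y then v y else 0) ^ 2
      = ∑ y ∈ Q, ∑ y' ∈ Q, v y * v y' *
          ((S.filter (fun x => r x y ∧ r x y')).card : ℚ) := by
  have h1 : ∀ x ∈ S, (∑ y ∈ Q, if r x y then v y else 0) ^ 2
      = ∑ y ∈ Q, ∑ y' ∈ Q, if r x y ∧ r x y' then v y * v y' else 0 := by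
    intro x _
    rw [sq, Finset.sum_mul_sum]
    refine Finset.sum_congr rfl fun y _ => Finset.sum_congr rfl fun y' _ => ?_
    split_ifs with h1 h2 h3 <;> simp_all
  rw [Finset.sum_congr rfl h1, Finset.sum_comm]
  refine Finset.sum_congr rfl fun y _ => ?_
  rw [Finset.sum_comm]
  refine Finset.sum_congr rfl fun y' _ => ?_
  rw [← Finset.sum_filter, Finset.sum_const, nsmul_eq_mul]
  ring

lemma count_key (s : ℕ) (hs : 1 ≤ s) (A A' : Finset (Fin (2 * s + 1)))
    (hA : A.card = s + 1) (hA' : A'.card = s + 1) :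
    (((univ : Finset (Fin (2*s+1))).powersetCard s).filter (fun B => B ⊆ A ∧ B ⊆ A')).card
      = (((univ : Finset (Fin (2*s+1))).powersetCard (s + 2)).filter (fun F => A ⊆ F ∧ A' ⊆ F)).card
        + (if A = A' then 1 else 0) := by
  obtain ⟨k, rfl⟩ : ∃ k, s = k + 1 := ⟨s - 1, by omega⟩
  have hn : Fintype.card (Fin (2*(k+1)+1)) = 2*(k+1)+1 := Fintype.card_fin _
  have hL : (((univ : Finset (Fin (2*(k+1)+1))).powersetCard (k+1)).filter (fun B => B ⊆ A ∧ B ⊆ A'))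
      = (A ∩ A').powersetCard (k+1) := by
    ext B
    simp [Finset.mem_powersetCard_univ, Finset.mem_powersetCard, Finset.subset_inter_iff, and_comm]
  have hR : (((univ : Finset (Fin (2*(k+1)+1))).powersetCard (k+1+2)).filter (fun F => A ⊆ F ∧ A' ⊆ F)).card
      = ((A ∪ A')ᶜ.powersetCard k).card := by
    refine Finset.card_bij' (fun F _ => Fᶜ) (fun G _ => Gᶜ) ?_ ?_ ?_ ?_
    · intro F hF
      simp only [Finset.mem_filter, Finset.mem_powersetCard_univ] at hF
      rw [Finset.mem_powersetCard]
      refine ⟨Finset.compl_subset_compl.mpr (Finset.union_subset hF.2.1 hF.2.2), ?_⟩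
      rw [Finset.card_compl, hF.1, hn]; omega
    · intro G hG
      rw [Finset.mem_powersetCard] at hG
      rw [Finset.mem_filter, Finset.mem_powersetCard_univ]
      have hsub : A ∪ A' ⊆ Gᶜ := Finset.subset_compl_comm.mp hG.1
      refine ⟨?_, (Finset.union_subset_iff.mp hsub).1, (Finset.union_subset_iff.mp hsub).2⟩
      rw [Finset.card_compl, hG.2, hn]; omega
    · intro F _; exact compl_compl F
    · intro G _; exact compl_compl G
  rw [hL, hR, Finset.card_powersetCard, Finset.card_powersetCard]
  have huA : (A ∪ A').card ≤ 2*(k+1)+1 := by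
    have := Finset.card_le_univ (A ∪ A'); omega
  have hui : (A ∪ A').card + (A ∩ A').card = 2*(k+1)+2 := by
    rw [Finset.card_union_add_card_inter, hA, hA']; ring
  have ht1 : 1 ≤ (A ∩ A').card := by omega
  have hc : (A ∪ A')ᶜ.card = (A ∩ A').card - 1 := by
    rw [Finset.card_compl, hn]; omega
  rw [hc]
  have hts : (A ∩ A').card ≤ k + 2 := hA ▸ Finset.card_le_card inter_subset_left
  by_cases hAA : A = A'
  · subst hAA
    have hII : (A ∩ A).card = k + 2 := by rw [Finset.inter_self, hA]
    rw [if_pos rfl, hII]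
    show (k+2).choose (k+1) = (k + 2 - 1).choose k + 1
    have h1 : (k+2).choose (k+1) = k + 2 := Nat.choose_succ_self_right (k+1)
    have h2 : (k + 2 - 1).choose k = k + 1 := by
      rw [show k + 2 - 1 = k + 1 from rfl]; exact Nat.choose_succ_self_right k
    omega
  · rw [if_neg hAA]
    have htlt : (A ∩ A').card ≤ k + 1 := by
      rcases Nat.lt_or_ge (A ∩ A').card (k+2) with h | h
      · omega
      · exfalso
        have he : A ∩ A' = A := Finset.eq_of_subset_of_card_le inter_subset_left (by omega)
        have hsub : A ⊆ A' := by rw [← he]; exact inter_subset_right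
        exact hAA (Finset.eq_of_subset_of_card_le hsub (by omega))
    rcases Nat.lt_or_ge (A ∩ A').card (k+1) with h | h
    · rw [Nat.choose_eq_zero_of_lt h, Nat.choose_eq_zero_of_lt (by omega)]
    · have he : (A ∩ A').card = k+1 := by omega
      rw [he, Nat.choose_self, show k + 1 - 1 = k from rfl, Nat.choose_self]

lemma core (s : ℕ) (hs : 1 ≤ s) (v : Finset (Fin (2*s+1)) → ℚ)
    (h : ∀ B ∈ (univ : Finset (Fin (2*s+1))).powersetCard s,
        ∑ A ∈ (univ : Finset (Fin (2*s+1))).powersetCard (s+1),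
          (if B ⊆ A then v A else 0) = 0) :
    ∀ A ∈ (univ : Finset (Fin (2*s+1))).powersetCard (s+1), v A = 0 := by
  set Q := (univ : Finset (Fin (2*s+1))).powersetCard (s+1) with hQ
  have h0 : ∑ B ∈ (univ : Finset (Fin (2*s+1))).powersetCard s,
      (∑ A ∈ Q, if B ⊆ A then v A else 0) ^ 2 = 0 :=
    Finset.sum_eq_zero fun B hB => by rw [h B hB]; ring
  rw [expand_sq _ Q (fun B A => B ⊆ A) v] at h0
  have hsplit : ∀ A ∈ Q, ∀ A' ∈ Q,
      v A * v A' * ((((univ : Finset (Fin (2*s+1))).powersetCard s).filter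
          (fun B => B ⊆ A ∧ B ⊆ A')).card : ℚ)
        = v A * v A' * ((((univ : Finset (Fin (2*s+1))).powersetCard (s+2)).filter
            (fun F => A ⊆ F ∧ A' ⊆ F)).card : ℚ)
          + v A * v A' * (if A = A' then 1 else 0) := by
    intro A hA A' hA'
    rw [Finset.mem_powersetCard_univ] at hA hA'
    rw [count_key s hs A A' hA hA']
    push_cast
    split_ifs <;> ring
  rw [Finset.sum_congr rfl fun A hA => Finset.sum_congr rfl fun A' hA' =>
    hsplit A hA A' hA'] at h0
  simp only [Finset.sum_add_distrib] at h0
  have hT : ∑ A ∈ Q, ∑ A' ∈ Q, v A * v A' *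
      ((((univ : Finset (Fin (2*s+1))).powersetCard (s+2)).filter
        (fun F => A ⊆ F ∧ A' ⊆ F)).card : ℚ)
      = ∑ F ∈ (univ : Finset (Fin (2*s+1))).powersetCard (s+2),
          (∑ A ∈ Q, if A ⊆ F then v A else 0) ^ 2 := by
    rw [expand_sq _ Q (fun F A => A ⊆ F) v]
  have hdiag : ∑ A ∈ Q, ∑ A' ∈ Q, v A * v A' * (if A = A' then 1 else 0)
      = ∑ A ∈ Q, (v A) ^ 2 := by
    refine Finset.sum_congr rfl fun A hA => ?_
    rw [Finset.sum_eq_single A]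
    · simp [sq]
    · intro A' _ hne; simp [Ne.symm hne]
    · intro hnA; exact absurd hA hnA
  rw [hT, hdiag] at h0
  have h1 : ∑ A ∈ Q, (v A) ^ 2 = 0 := by
    have hTnn : 0 ≤ ∑ F ∈ (univ : Finset (Fin (2*s+1))).powersetCard (s+2),
        (∑ A ∈ Q, if A ⊆ F then v A else 0) ^ 2 :=
      Finset.sum_nonneg fun F _ => sq_nonneg _
    have hSnn : 0 ≤ ∑ A ∈ Q, (v A) ^ 2 := Finset.sum_nonneg fun A _ => sq_nonneg _
    linarith
  intro A hA
  have := (Finset.sum_eq_zero_iff_of_nonneg (fun A _ => sq_nonneg (v A))).mp h1 A hA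
  exact pow_eq_zero_iff (by norm_num) |>.mp this

/-- the inclusion incidence matrix between `s`-element and `(s+1)`-element
subsets of a `(2s+1)`-element set is invertible over `ℚ`. -/
theorem incidence_matrix_bijective (s : ℕ) (hs : 1 ≤ s) :
    Function.Bijective
      (Matrix.mulVecLin (Matrix.of
        fun (B : {B : Finset (Fin (2 * s + 1)) // B.card = s})
            (A : {A : Finset (Fin (2 * s + 1)) // A.card = s + 1}) =>
          if B.1 ⊆ A.1 then (1 : ℚ) else 0)) := by
  set f := (Matrix.mulVecLin (Matrix.of
        fun (B : {B : Finset (Fin (2 * s + 1)) // B.card = s})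
            (A : {A : Finset (Fin (2 * s + 1)) // A.card = s + 1}) =>
          if B.1 ⊆ A.1 then (1 : ℚ) else 0)) with hf
  have hinj : Function.Injective f := by
    rw [injective_iff_map_eq_zero]
    intro v hv
    set w : Finset (Fin (2*s+1)) → ℚ :=
      fun X => if hX : X.card = s+1 then v ⟨X, hX⟩ else 0 with hw
    have hsum : ∀ B ∈ (univ : Finset (Fin (2*s+1))).powersetCard s,
        ∑ A ∈ (univ : Finset (Fin (2*s+1))).powersetCard (s+1),
          (if B ⊆ A then w A else 0) = 0 := by
      intro B hB
      rw [Finset.mem_powersetCard_univ] at hB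
      have h1 := congrFun hv ⟨B, hB⟩
      rw [hf] at h1
      simp only [Matrix.mulVecLin_apply, Matrix.mulVec, dotProduct, Matrix.of_apply,
        Pi.zero_apply] at h1
      rw [Finset.sum_subtype _ (fun X => Finset.mem_powersetCard_univ)
        (fun X => if B ⊆ X then w X else 0)]
      refine Eq.trans ?_ h1
      refine Finset.sum_congr rfl fun A _ => ?_
      have hwA : w A.1 = v A := by simp [hw, A.2]
      rw [hwA, ite_mul, one_mul, zero_mul]
    have hzero := core s hs w hsum
    funext A
    have := hzero A.1 (Finset.mem_powersetCard_univ.mpr A.2)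
    simpa [hw, A.2] using this
  refine ⟨hinj, ?_⟩
  have hdim : Module.finrank ℚ ({A : Finset (Fin (2 * s + 1)) // A.card = s + 1} → ℚ)
      = Module.finrank ℚ ({B : Finset (Fin (2 * s + 1)) // B.card = s} → ℚ) := by
    rw [Module.finrank_pi, Module.finrank_pi, Fintype.card_finset_len,
      Fintype.card_finset_len, Fintype.card_fin]
    have : 2 * s + 1 - (s + 1) = s := by omega
    calc (2*s+1).choose (s+1) = (2*s+1).choose (2*s+1 - s) := by rw [show 2*s+1-s = s+1 from by omega]
    _ = (2*s+1).choose s := Nat.choose_symm (by omega)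
  exact (LinearMap.injective_iff_surjective_of_finrank_eq_finrank hdim).mp hinj

end Paper
end

section
/- Let k be a field and n ≥ 2. In the polynomial ring k[z_{uv} : u,v ∈ {1,…,n,1̄,…,n̄}], let I be the ideal generated by the elements Σ_{l=1}^n (z_{lu} z_{l̄ v} − z_{l̄ u} z_{lv}) − ε_{uv} for all u,v (where ε_{uv} = 1 if v = ū, −1 if u = v̄, 0 otherwise). Then I has trivial intersection with the polynomial subalgebra generated by the variables z_{uv} with v ∈ {1,…,n} and (u,v) not of the form (k̄, l) with k < l (k, l ∈ {1,…,n}). -/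
open Finset
open scoped Classical

namespace Paper

/-- The generic `2n × 2n` matrix with rows and columns indexed by `{1,1̄,…,n,n̄}`
(encoded as `Fin (2n)` via `p ↦ 2p-2`, `p̄ ↦ 2p-1`, 0-based). -/
noncomputable def genMatSp (k : Type*) [CommSemiring k] (n : ℕ) :
    Matrix (Fin (2 * n)) (Fin (2 * n)) (MvPolynomial (Fin (2 * n) × Fin (2 * n)) k) :=
  Matrix.of fun u v => MvPolynomial.X (u, v)

/-- The defining relations of `Sp_{2n}`. -/
noncomputable def spRel (k : Type*) [CommRing k] (n : ℕ) (u v : Fin (2 * n)) :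
    MvPolynomial (Fin (2 * n) × Fin (2 * n)) k :=
  (∑ l : Fin n, (genMatSp k n (emb0 l) u * genMatSp k n (emb1 l) v
    - genMatSp k n (emb1 l) u * genMatSp k n (emb0 l) v)) - eps u v

-- ==== auxiliary development ====

abbrev KK (k : Type*) [Field k] (n : ℕ) : Type _ :=
  FractionRing (MvPolynomial (Fin (2 * n) × Fin (2 * n)) k)

noncomputable def ιh (k : Type*) [Field k] (n : ℕ) :
    MvPolynomial (Fin (2 * n) × Fin (2 * n)) k →+* KK k n := algebraMap _ _

def half {n : ℕ} (i : Fin (2 * n)) : Fin n := ⟨i.1 / 2, by have := i.2; omega⟩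

theorem half_emb0 {n : ℕ} (a : Fin n) : half (emb0 a) = a := by
  apply Fin.ext; simp [half, emb0]

theorem half_emb1 {n : ℕ} (a : Fin n) : half (emb1 a) = a := by
  apply Fin.ext; simp [half, emb1]; omega

theorem emb0_mod {n : ℕ} (a : Fin n) : (emb0 a).1 % 2 = 0 := by simp [emb0]
theorem emb1_mod {n : ℕ} (a : Fin n) : (emb1 a).1 % 2 = 1 := by simp [emb1]

theorem parity_cases {n : ℕ} (u : Fin (2 * n)) : (∃ a, u = emb0 a) ∨ ∃ a, u = emb1 a := by
  rcases Nat.mod_two_eq_zero_or_one u.1 with h | h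
  · exact Or.inl ⟨half u, by apply Fin.ext; simp [emb0, half]; omega⟩
  · exact Or.inr ⟨half u, by apply Fin.ext; simp [emb1, half]; omega⟩

section Mats

variable (k : Type*) [Field k] (n : ℕ)

noncomputable def matA : Matrix (Fin n) (Fin n) (KK k n) :=
  fun a b => ιh k n (MvPolynomial.X (emb0 a, emb0 b))

noncomputable def matC0 : Matrix (Fin n) (Fin n) (KK k n) :=
  fun a b => if b ≤ a then ιh k n (MvPolynomial.X (emb1 a, emb0 b)) else 0

noncomputable def genA : Matrix (Fin n) (Fin n) (MvPolynomial (Fin (2 * n) × Fin (2 * n)) k) :=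
  fun a b => MvPolynomial.X (emb0 a, emb0 b)

def mkM {α : Type*} [CommRing α] {n : ℕ} (A : Matrix (Fin n) (Fin n) α) :
    Matrix {x : Fin n × Fin n // x.1 < x.2} {x : Fin n × Fin n // x.1 < x.2} α :=
  fun q p =>
    (if p.1.2 = q.1.2 then A p.1.1 q.1.1 else 0) - (if p.1.2 = q.1.1 then A p.1.1 q.1.2 else 0)

theorem mkM_map {α β : Type*} [CommRing α] [CommRing β] (f : α →+* β) {n : ℕ}
    (A : Matrix (Fin n) (Fin n) α) : f.mapMatrix (mkM A) = mkM (f.mapMatrix A) := by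
  ext q p
  simp [mkM, apply_ite f]

theorem mkM_one {α : Type*} [CommRing α] {n : ℕ} :
    mkM (1 : Matrix (Fin n) (Fin n) α) = 1 := by
  ext q p
  obtain ⟨⟨k1, l1⟩, hq⟩ := q; obtain ⟨⟨a, b⟩, hp⟩ := p
  have hq' : k1 < l1 := hq
  have hp' : a < b := hp
  have h2 : (if b = k1 then (1 : Matrix (Fin n) (Fin n) α) a l1 else 0) = 0 := by
    rcases eq_or_ne b k1 with rfl | h
    · rw [if_pos rfl, Matrix.one_apply_ne (by omega)]
    · rw [if_neg h]
  show (if b = l1 then (1 : Matrix (Fin n) (Fin n) α) a k1 else 0) - _ = _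
  rw [h2, sub_zero]
  simp only [Matrix.one_apply, Subtype.mk.injEq, Prod.mk.injEq]
  rcases eq_or_ne b l1 with rfl | h
  · rw [if_pos rfl]
    rcases eq_or_ne a k1 with rfl | h3
    · simp
    · rw [if_neg h3, if_neg (fun hc => h3 hc.1.symm)]
  · rw [if_neg h, if_neg (fun hc => h hc.2.symm)]

/-- evaluation at the identity matrix -/
noncomputable def evδ : MvPolynomial (Fin (2 * n) × Fin (2 * n)) k →+* k :=
  MvPolynomial.eval (fun p : Fin (2 * n) × Fin (2 * n) => if p.1 = p.2 then (1 : k) else 0)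

theorem evδ_genA : (evδ k n).mapMatrix (genA k n) = 1 := by
  ext a b
  simp only [RingHom.mapMatrix_apply, Matrix.map_apply, genA, evδ, Matrix.one_apply,
    MvPolynomial.eval_X]
  have : (emb0 a = emb0 b) ↔ a = b := by
    constructor
    · intro h; apply Fin.ext
      have := congrArg Fin.val h
      simp [emb0] at this; omega
    · rintro rfl; rfl
  simp [this]

theorem matA_eq : matA k n = (ιh k n).mapMatrix (genA k n) := rfl

theorem detA_ne_zero : (matA k n).det ≠ 0 := by
  rw [matA_eq, ← RingHom.map_det]
  intro h
  have h0 : (genA k n).det = 0 :=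
    (map_eq_zero_iff _ (IsFractionRing.injective _ _)).mp h
  have h1 : (evδ k n) ((genA k n).det) = 1 := by
    rw [RingHom.map_det, evδ_genA, Matrix.det_one]
  rw [h0, map_zero] at h1
  exact zero_ne_one h1

theorem detM_ne_zero : (mkM (matA k n)).det ≠ 0 := by
  rw [matA_eq, ← mkM_map, ← RingHom.map_det]
  intro h
  have h0 : (mkM (genA k n)).det = 0 :=
    (map_eq_zero_iff _ (IsFractionRing.injective _ _)).mp h
  have h1 : (evδ k n) ((mkM (genA k n)).det) = 1 := by
    rw [RingHom.map_det, mkM_map, evδ_genA, mkM_one, Matrix.det_one]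
  rw [h0, map_zero] at h1
  exact zero_ne_one h1

end Mats

section Solve

open Matrix

variable (k : Type*) [Field k] (n : ℕ)

noncomputable def wvec : {x : Fin n × Fin n // x.1 < x.2} → KK k n :=
  fun q => ((matC0 k n)ᵀ * matA k n - (matA k n)ᵀ * matC0 k n) q.1.1 q.1.2

noncomputable def uvec : {x : Fin n × Fin n // x.1 < x.2} → KK k n :=
  (mkM (matA k n))⁻¹ *ᵥ wvec k n

noncomputable def matU : Matrix (Fin n) (Fin n) (KK k n) :=
  fun a b => if h : a < b then uvec k n ⟨(a, b), h⟩ else 0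

noncomputable def matC : Matrix (Fin n) (Fin n) (KK k n) := matC0 k n + matU k n

noncomputable def matD : Matrix (Fin n) (Fin n) (KK k n) := ((matA k n)ᵀ)⁻¹

theorem hMvec : mkM (matA k n) *ᵥ uvec k n = wvec k n := by
  rw [uvec, Matrix.mulVec_mulVec,
    Matrix.mul_nonsing_inv _ (isUnit_iff_ne_zero.2 (detM_ne_zero k n)), Matrix.one_mulVec]

theorem matU_apply (a b : Fin n) :
    matU k n a b = if h : a < b then uvec k n ⟨(a, b), h⟩ else 0 := rfl

theorem skew_aux {α : Type*} [CommRing α] {m : ℕ} (X Y : Matrix (Fin m) (Fin m) α)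
    (i j : Fin m) : (Xᵀ * Y - Yᵀ * X) i j + (Xᵀ * Y - Yᵀ * X) j i = 0 := by
  simp only [Matrix.sub_apply, Matrix.mul_apply, Matrix.transpose_apply]
  rw [← Finset.sum_sub_distrib, ← Finset.sum_sub_distrib, ← Finset.sum_add_distrib]
  exact Finset.sum_eq_zero fun a _ => by ring

theorem diag_aux {α : Type*} [CommRing α] {m : ℕ} (X Y : Matrix (Fin m) (Fin m) α)
    (i : Fin m) : (Xᵀ * Y - Yᵀ * X) i i = 0 := by
  simp only [Matrix.sub_apply, Matrix.mul_apply, Matrix.transpose_apply]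
  rw [← Finset.sum_sub_distrib]
  exact Finset.sum_eq_zero fun a _ => by ring

theorem hG_lt (i j : Fin n) (h : i < j) :
    ((matA k n)ᵀ * matU k n - (matU k n)ᵀ * matA k n) i j
      = ((matC0 k n)ᵀ * matA k n - (matA k n)ᵀ * matC0 k n) i j := by
  have h1 := congrFun (hMvec k n) ⟨(i, j), h⟩
  have h2 : wvec k n ⟨(i, j), h⟩
      = ((matC0 k n)ᵀ * matA k n - (matA k n)ᵀ * matC0 k n) i j := rfl
  rw [← h2, ← h1]
  -- compute the mulVec entry as a sum over all pairs
  set F : Fin n × Fin n → KK k n := fun x =>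
    ((if x.2 = j then matA k n x.1 i else 0) - (if x.2 = i then matA k n x.1 j else 0))
      * matU k n x.1 x.2 with hF
  have e1 : (mkM (matA k n) *ᵥ uvec k n) ⟨(i, j), h⟩
      = ∑ p : {x : Fin n × Fin n // x.1 < x.2}, F p.1 := by
    simp only [Matrix.mulVec, dotProduct, mkM]
    refine Finset.sum_congr rfl fun p _ => ?_
    have : matU k n p.1.1 p.1.2 = uvec k n p := by
      rw [matU_apply, dif_pos p.2]
    rw [hF]
    simp only [this]
  have e2 : ∑ p : {x : Fin n × Fin n // x.1 < x.2}, F p.1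
      = ∑ x ∈ Finset.univ.filter (fun x : Fin n × Fin n => x.1 < x.2), F x :=
    (Finset.sum_subtype _ (by simp) F).symm
  have e3 : ∑ x ∈ Finset.univ.filter (fun x : Fin n × Fin n => x.1 < x.2), F x
      = ∑ x : Fin n × Fin n, F x := by
    refine Finset.sum_filter_of_ne fun x _ hx => ?_
    by_contra hlt
    apply hx
    rw [hF]
    simp only [matU_apply, dif_neg hlt, mul_zero]
  rw [e1, e2, e3, Fintype.sum_prod_type]
  simp only [Matrix.sub_apply, Matrix.mul_apply, Matrix.transpose_apply]
  rw [← Finset.sum_sub_distrib]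
  refine Finset.sum_congr rfl fun a _ => ?_
  rw [hF]
  simp only [sub_mul, ite_mul, zero_mul, Finset.sum_sub_distrib, Finset.sum_ite_eq',
    Finset.mem_univ, if_true]
  ring

theorem hG : (matA k n)ᵀ * matU k n - (matU k n)ᵀ * matA k n
    = (matC0 k n)ᵀ * matA k n - (matA k n)ᵀ * matC0 k n := by
  ext i j
  rcases lt_trichotomy i j with h | h | h
  · exact hG_lt k n i j h
  · subst h; rw [diag_aux, diag_aux]
  · have h1 := hG_lt k n j i h
    have h2 := skew_aux (matA k n) (matU k n) i j
    have h3 := skew_aux (matC0 k n) (matA k n) i j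
    linear_combination h2 - h3 - h1

theorem hsymm : (matA k n)ᵀ * matC k n = (matC k n)ᵀ * matA k n := by
  have h := hG k n
  rw [sub_eq_sub_iff_add_eq_add] at h
  rw [matC, Matrix.mul_add, Matrix.transpose_add, Matrix.add_mul]
  calc (matA k n)ᵀ * matC0 k n + (matA k n)ᵀ * matU k n
      = (matA k n)ᵀ * matU k n + (matA k n)ᵀ * matC0 k n := add_comm _ _
    _ = (matC0 k n)ᵀ * matA k n + (matU k n)ᵀ * matA k n := h
    _ = _ := rfl

theorem hAD : (matA k n)ᵀ * matD k n = 1 := by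
  rw [matD]
  exact Matrix.mul_nonsing_inv _
    (isUnit_iff_ne_zero.2 (by rw [Matrix.det_transpose]; exact detA_ne_zero k n))

theorem hDA : (matD k n)ᵀ * matA k n = 1 := by
  have : (matD k n)ᵀ = (matA k n)⁻¹ := by
    rw [matD, ← Matrix.transpose_nonsing_inv, Matrix.transpose_transpose]
  rw [this]
  exact Matrix.nonsing_inv_mul _ (isUnit_iff_ne_zero.2 (detA_ne_zero k n))

end Solve

section FMat

open Matrix

variable (k : Type*) [Field k] (n : ℕ)

noncomputable def matF : Matrix (Fin (2 * n)) (Fin (2 * n)) (KK k n) := fun i j =>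
  if i.1 % 2 = 0 then (if j.1 % 2 = 0 then matA k n (half i) (half j) else 0)
  else (if j.1 % 2 = 0 then matC k n (half i) (half j) else matD k n (half i) (half j))

theorem matF_00 (a b : Fin n) : matF k n (emb0 a) (emb0 b) = matA k n a b := by
  simp [matF, emb0_mod, half_emb0]

theorem matF_01 (a b : Fin n) : matF k n (emb0 a) (emb1 b) = 0 := by
  simp [matF, emb0_mod, emb1_mod]

theorem matF_10 (a b : Fin n) : matF k n (emb1 a) (emb0 b) = matC k n a b := by
  simp [matF, emb0_mod, emb1_mod, half_emb0, half_emb1]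

theorem matF_11 (a b : Fin n) : matF k n (emb1 a) (emb1 b) = matD k n a b := by
  simp [matF, emb1_mod, half_emb1]

theorem eps00 (a b : Fin n) : (eps (emb0 a) (emb0 b) : KK k n) = 0 := by
  have h1 : (emb0 a).1 = 2 * a.1 := rfl
  have h2 : (emb0 b).1 = 2 * b.1 := rfl
  rw [eps, if_neg (by omega), if_neg (by omega)]

theorem eps11 (a b : Fin n) : (eps (emb1 a) (emb1 b) : KK k n) = 0 := by
  have h1 : (emb1 a).1 = 2 * a.1 + 1 := rfl
  have h2 : (emb1 b).1 = 2 * b.1 + 1 := rfl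
  rw [eps, if_neg (by omega), if_neg (by omega)]

theorem eps01 (a b : Fin n) :
    (eps (emb0 a) (emb1 b) : KK k n) = if a = b then 1 else 0 := by
  have h1 : (emb0 a).1 = 2 * a.1 := rfl
  have h2 : (emb1 b).1 = 2 * b.1 + 1 := rfl
  rcases eq_or_ne a b with rfl | h
  · rw [if_pos rfl, eps, if_pos (by omega)]
  · have hab : a.1 ≠ b.1 := fun hc => h (Fin.ext hc)
    rw [if_neg h, eps, if_neg (by omega), if_neg (by omega)]

theorem eps10 (a b : Fin n) :
    (eps (emb1 a) (emb0 b) : KK k n) = -(if a = b then 1 else 0) := by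
  have h1 : (emb1 a).1 = 2 * a.1 + 1 := rfl
  have h2 : (emb0 b).1 = 2 * b.1 := rfl
  rcases eq_or_ne a b with rfl | h
  · rw [if_pos rfl, eps, if_neg (by omega), if_pos (by omega)]
  · have hab : a.1 ≠ b.1 := fun hc => h (Fin.ext hc)
    rw [if_neg h, eps, if_neg (by omega), if_neg (by omega), neg_zero]

theorem keySum (u v : Fin (2 * n)) :
    ∑ l : Fin n, (matF k n (emb0 l) u * matF k n (emb1 l) v
      - matF k n (emb1 l) u * matF k n (emb0 l) v) = (eps u v : KK k n) := by
  rcases parity_cases u with ⟨a, rfl⟩ | ⟨a, rfl⟩ <;>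
    rcases parity_cases v with ⟨b, rfl⟩ | ⟨b, rfl⟩
  · -- both even
    simp only [matF_00, matF_10, eps00]
    have h := congrFun (congrFun (hsymm k n) a) b
    simp only [Matrix.mul_apply, Matrix.transpose_apply] at h
    rw [Finset.sum_sub_distrib, h, sub_self]
  · -- u even, v odd
    simp only [matF_00, matF_01, matF_10, matF_11, eps01, mul_zero, sub_zero]
    have h := congrFun (congrFun (hAD k n) a) b
    simp only [Matrix.mul_apply, Matrix.transpose_apply, Matrix.one_apply] at h
    exact h
  · -- u odd, v even
    simp only [matF_00, matF_01, matF_10, matF_11, eps10, zero_mul, zero_sub]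
    have h := congrFun (congrFun (hDA k n) a) b
    simp only [Matrix.mul_apply, Matrix.transpose_apply, Matrix.one_apply] at h
    rw [Finset.sum_neg_distrib, h]
  · -- both odd
    simp only [matF_01, matF_11, zero_mul, mul_zero, sub_zero, eps11,
      Finset.sum_const_zero]

end FMat

section Phi

open Matrix

variable (k : Type*) [Field k] (n : ℕ)

noncomputable def φmap : MvPolynomial (Fin (2 * n) × Fin (2 * n)) k →+* KK k n :=
  MvPolynomial.eval₂Hom ((ιh k n).comp MvPolynomial.C)
    (fun p : Fin (2 * n) × Fin (2 * n) => matF k n p.1 p.2)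

theorem φmap_X (u v : Fin (2 * n)) :
    φmap k n (MvPolynomial.X (u, v)) = matF k n u v :=
  MvPolynomial.eval₂Hom_X' _ _ _

theorem φmap_gen (u v : Fin (2 * n)) :
    φmap k n (genMatSp k n u v) = matF k n u v :=
  φmap_X k n u v

theorem φmap_rel (u v : Fin (2 * n)) : φmap k n (spRel k n u v) = 0 := by
  have heps : φmap k n (eps u v) = (eps u v : KK k n) := by
    simp only [eps, apply_ite (φmap k n), _root_.map_one, map_neg, map_zero]
  rw [spRel, map_sub, map_sum, heps]
  simp only [map_sub, _root_.map_mul, φmap_gen]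
  rw [keySum, sub_self]

theorem matF_allowed (u v : Fin (2 * n)) (hv : v.1 % 2 = 0)
    (hu : ¬ (u.1 % 2 = 1 ∧ u.1 < v.1)) :
    matF k n u v = ιh k n (MvPolynomial.X (u, v)) := by
  rcases parity_cases u with ⟨a, rfl⟩ | ⟨a, rfl⟩ <;>
    rcases parity_cases v with ⟨b, rfl⟩ | ⟨b, rfl⟩
  · rw [matF_00]; rfl
  · exact absurd hv (by rw [emb1_mod]; omega)
  · -- u = emb1 a, v = emb0 b, and b ≤ a
    have hba : b ≤ a := by
      have h1 : (emb1 a).1 = 2 * a.1 + 1 := rfl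
      have h2 : (emb0 b).1 = 2 * b.1 := rfl
      have := emb1_mod a
      by_contra hc
      exact hu ⟨this, by omega⟩
    rw [matF_10, matC]
    have h0 : (matC0 k n + matU k n) a b = matC0 k n a b + matU k n a b := rfl
    rw [h0, matU_apply, dif_neg (by omega), add_zero]
    show (if b ≤ a then ιh k n (MvPolynomial.X (emb1 a, emb0 b)) else 0) = _
    rw [if_pos hba]
  · exact absurd hv (by rw [emb1_mod]; omega)

end Phi

/-- the defining ideal of `Sp_{2n}` intersects trivially the polynomial
subalgebra generated by the variables `z_{uv}` with `v ∈ {1,…,n}` and `(u,v)` not of the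
form `(k̄, l)` with `k < l`. -/
theorem symplectic_ideal_inter_subalgebra_eq_bot (k : Type*) [Field k] (n : ℕ) (hn : 2 ≤ n)
    (p : MvPolynomial (Fin (2 * n) × Fin (2 * n)) k)
    (hp : p ∈ Ideal.span {q | ∃ u v : Fin (2 * n), q = spRel k n u v})
    (hp' : p ∈ Algebra.adjoin k {q : MvPolynomial (Fin (2 * n) × Fin (2 * n)) k |
      ∃ u v : Fin (2 * n), (v.1 % 2 = 0 ∧ ¬ (u.1 % 2 = 1 ∧ u.1 < v.1)) ∧
        q = MvPolynomial.X (u, v)}) :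
    p = 0 := by
  have h1 : φmap k n p = 0 := by
    have hker : Ideal.span {q | ∃ u v : Fin (2 * n), q = spRel k n u v}
        ≤ RingHom.ker (φmap k n) := by
      rw [Ideal.span_le]
      rintro q ⟨u, v, rfl⟩
      exact φmap_rel k n u v
    exact hker hp
  have h2 : φmap k n p = ιh k n p := by
    refine Algebra.adjoin_induction ?_ ?_ ?_ ?_ hp'
    · rintro q ⟨u, v, hc, rfl⟩
      rw [φmap_X, matF_allowed k n u v hc.1 hc.2]
    · intro r
      rw [MvPolynomial.algebraMap_eq]
      rw [show φmap k n (MvPolynomial.C r) = ((ιh k n).comp MvPolynomial.C) r from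
        MvPolynomial.eval₂Hom_C _ _ _]
      rfl
    · intro x y _ _ hx hy
      rw [RingHom.map_add (φmap k n), RingHom.map_add (ιh k n), hx, hy]
    · intro x y _ _ hx hy
      rw [RingHom.map_mul (φmap k n), RingHom.map_mul (ιh k n), hx, hy]
  have h3 : ιh k n p = 0 := h2.symm.trans h1
  exact (map_eq_zero_iff _ (IsFractionRing.injective _ _)).mp h3

end Paper
end

section
/- Let k be a field and n ≥ 2. Consider the polynomial ring k[z_{uv}^{(m)} : 1 ≤ u,v ≤ n, m ∈ ℕ] and the n×n matrix z(s) of formal power series z_{uv}(s) = Σ_{m≥0} z_{uv}^{(m)} s^m. Let I be the ideal generated by all s-coefficients of det(z(s)) − 1. Then I has trivial intersection with the polynomial subalgebra generated by all variables z_{uv}^{(m)} with (u,v) ≠ (n,n). -/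
/-! Expanding `det z(s)` along the last row gives `det z(s) = b(s) + z_nn(s) a(s)`, where `a` is
the `(n,n)` cofactor and neither `a` nor `b` involves `z_nn`. The constant term of `a` is a nonzero
polynomial (it is `1` at the identity matrix), so `a` becomes a unit in `K⟦s⟧` for the fraction
field `K` of the polynomial ring. Substituting `z_nn(s) := (1 - b(s)) a(s)⁻¹` therefore gives a
homomorphism to `K` that kills every coefficient of `det z(s) - 1`, yet restricts to the
injective inclusion on the subalgebra generated by the other variables. -/

open Finset
open scoped Classical

namespace Matrix

variable {n R : Type*} [Fintype n] [DecidableEq n] [CommRing R]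

theorem det_updateRow_update_self (M : Matrix n n R) (i : n) (c : R) :
    (M.updateRow i (Function.update (M i) i c)).det =
      (M.updateRow i (Function.update (M i) i 0)).det + c * M.adjugate i i := by
  have hrow : Function.update (M i) i c = Function.update (M i) i 0 + c • Pi.single i 1 := by
    ext j
    rcases eq_or_ne j i with rfl | hj <;> simp [*]
  rw [hrow, det_updateRow_add, det_updateRow_smul, adjugate_apply]

theorem exists_det_updateRow_update_self_eq (M : Matrix n n R) (i : n)
    (h : IsUnit (M.adjugate i i)) (d : R) :
    ∃ c, (M.updateRow i (Function.update (M i) i c)).det = d :=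
  ⟨(d - (M.updateRow i (Function.update (M i) i 0)).det) * ↑h.unit⁻¹, by
    rw [det_updateRow_update_self, mul_assoc, h.val_inv_mul, mul_one, add_sub_cancel]⟩

end Matrix

namespace Paper

/-- The generic `n × n` matrix of power series: the arc-space coordinates of `GL_n`. -/
noncomputable def genZ (k : Type*) [CommSemiring k] (n : ℕ) :
    Matrix (Fin n) (Fin n) (PowerSeries (MvPolynomial (Fin n × Fin n × ℕ) k)) :=
  Matrix.of fun u v => PowerSeries.mk fun m => MvPolynomial.X (u, v, m)

section

variable {k : Type*} [CommRing k] {n : ℕ}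

open PowerSeries

theorem span_coeff_det_genZ_sub_one_le_ker_aeval {T : Type*} [CommRing T] [Algebra k T]
    (P : Matrix (Fin n) (Fin n) (PowerSeries T)) (hP : P.det = 1) :
    Ideal.span {q | ∃ m : ℕ, q = coeff m ((genZ k n).det - 1)} ≤
      RingHom.ker (MvPolynomial.aeval fun x : Fin n × Fin n × ℕ => coeff x.2.2 (P x.1 x.2.1)) := by
  set f := MvPolynomial.aeval (R := k) fun x : Fin n × Fin n × ℕ => coeff x.2.2 (P x.1 x.2.1)
  have hmap : (genZ k n).map (PowerSeries.map (f : MvPolynomial _ k →+* T)) = P := by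
    ext u v m
    simp [f, genZ, coeff_map]
  rw [Ideal.span_le]
  rintro q ⟨m, rfl⟩
  rw [SetLike.mem_coe, RingHom.mem_ker, ← AlgHom.coe_toRingHom, ← coeff_map, map_sub, map_one,
    RingHom.map_det, RingHom.mapMatrix_apply, hmap, hP, sub_self, map_zero]

theorem aeval_coeff_eqOn_adjoin_X {T : Type*} [CommRing T] [Algebra k T]
    (f : MvPolynomial (Fin n × Fin n × ℕ) k →ₐ[k] T) (P : Matrix (Fin n) (Fin n) (PowerSeries T))
    (i j : Fin n)
    (hP : ∀ u v, (u, v) ≠ (i, j) → P u v = PowerSeries.map (f : _ →+* T) (genZ k n u v)) :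
    Set.EqOn (MvPolynomial.aeval fun x : Fin n × Fin n × ℕ => coeff x.2.2 (P x.1 x.2.1)) f
      ↑(Algebra.adjoin k {q : MvPolynomial (Fin n × Fin n × ℕ) k |
        ∃ (u v : Fin n) (m : ℕ), (u, v) ≠ (i, j) ∧ q = MvPolynomial.X (u, v, m)}) := by
  rw [AlgHom.eqOn_adjoin_iff]
  rintro _ ⟨u, v, m, huv, rfl⟩
  simp [hP u v huv, genZ, coeff_map]

theorem constantCoeff_adjugate_genZ_ne_zero [Nontrivial k] (i : Fin n) :
    constantCoeff ((genZ k n).adjugate i i) ≠ 0 := by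
  let ev := (MvPolynomial.eval fun x : Fin n × Fin n × ℕ => if x.1 = x.2.1 then (1 : k) else 0).comp
    constantCoeff
  have hone : ev.mapMatrix (genZ k n) = 1 := by
    ext u v
    simp [ev, genZ, Matrix.one_apply]
  have hev : ev ((genZ k n).adjugate i i) = 1 := by
    simpa [hone] using congrFun (congrFun (RingHom.map_adjugate ev (genZ k n)) i) i
  intro h0
  simp [ev, h0] at hev

theorem isUnit_adjugate_map_genZ [Nontrivial k] {K : Type*} [Field K]
    (g : MvPolynomial (Fin n × Fin n × ℕ) k →+* K) (hg : Function.Injective g) (i : Fin n) :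
    IsUnit (((genZ k n).map (PowerSeries.map g)).adjugate i i) := by
  rw [← RingHom.mapMatrix_apply, ← RingHom.map_adjugate, RingHom.mapMatrix_apply, Matrix.map_apply,
    isUnit_iff_constantCoeff, ← coeff_zero_eq_constantCoeff_apply, coeff_map,
    coeff_zero_eq_constantCoeff_apply]
  exact ((map_ne_zero_iff g hg).mpr (constantCoeff_adjugate_genZ_ne_zero i)).isUnit

end

/-- the defining ideal of the arc space of `SL_n` (generated by all
`s`-coefficients of `det z(s) - 1`) intersects trivially the polynomial subalgebra generated
by all variables `z_{uv}^{(m)}` with `(u,v) ≠ (n,n)`. -/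
theorem current_ideal_det_inter_subalgebra_eq_bot (k : Type*) [Field k] (n : ℕ) (hn : 2 ≤ n)
    (p : MvPolynomial (Fin n × Fin n × ℕ) k)
    (hp : p ∈ Ideal.span {q | ∃ m : ℕ,
      q = PowerSeries.coeff (R := MvPolynomial (Fin n × Fin n × ℕ) k) m ((genZ k n).det - 1)})
    (hp' : p ∈ Algebra.adjoin k {q : MvPolynomial (Fin n × Fin n × ℕ) k |
      ∃ (u v : Fin n) (m : ℕ),
        (u, v) ≠ ((⟨n - 1, by omega⟩ : Fin n), (⟨n - 1, by omega⟩ : Fin n)) ∧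
        q = MvPolynomial.X (u, v, m)}) :
    p = 0 := by
  set last : Fin n := ⟨n - 1, by omega⟩
  let A := MvPolynomial (Fin n × Fin n × ℕ) k
  let K := FractionRing A
  let g : A →ₐ[k] K := IsScalarTower.toAlgHom k A K
  have hg : Function.Injective g := IsFractionRing.injective A K
  let N := (genZ k n).map (PowerSeries.map (g : A →+* K))
  obtain ⟨w, hw⟩ :=
    N.exists_det_updateRow_update_self_eq last (isUnit_adjugate_map_genZ (g : A →+* K) hg last) 1
  let P := N.updateRow last (Function.update (N last) last w)
  have hP : ∀ u v, (u, v) ≠ (last, last) → P u v = N u v := by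
    intro u v huv
    rcases eq_or_ne u last with rfl | hu
    · simp_all [P]
    · simp [P, hu]
  have hker := span_coeff_det_genZ_sub_one_le_ker_aeval P hw hp
  rw [RingHom.mem_ker, aeval_coeff_eqOn_adjoin_X g P last last hP hp'] at hker
  exact hg (hker.trans (map_zero g).symm)

end Paper
end

section
/- Let k be a field of characteristic zero. Fix an integer κ ≥ 1, positive integers r_1,…,r_κ, and variables Y_{l,i} for l ∈ {1,…,κ}, i ∈ {1,…,r_l}. For a subset S ⊆ {1,…,κ}, let R_S ⊆ k[Y_{l,i}] be the subalgebra of polynomials in the variables {Y_{l,i} : l ∈ S, 1 ≤ i ≤ r_l} that are invariant under the full symmetric group on this whole set of Σ_{l∈S} r_l variables. Suppose S_1,…,S_κ ⊆ {1,…,κ} are subsets whose κ×κ indicator matrix (δ_i^j), with δ_i^j = 1 if i ∈ S_j and 0 otherwise, is invertible over ℚ. Then the k-subalgebra of k[Y_{l,i}] generated by R_{S_1} ∪ … ∪ R_{S_κ} equals the subalgebra of all polynomials invariant under the product group 𝔖_{r_1} × … × 𝔖_{r_κ}, where the factor 𝔖_{r_l} permutes the second indices of the variables Y_{l,1},…,Y_{l,r_l}.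 -/
/-!
Every generator of the left-hand side is invariant, which gives one inclusion. Conversely, the
invariants of `𝔖_{r_1} × ⋯ × 𝔖_{r_κ}` are generated by the symmetric polynomials of the single
blocks: peeling off one block, an invariant is a symmetric polynomial in that block with
coefficients in the polynomials of the other blocks, hence a polynomial in the block's elementary
symmetric polynomials, and by uniqueness of that polynomial its coefficients are invariant under
the remaining blocks. In characteristic zero Newton's identities generate the symmetric
polynomials of a block by its power sums `p_{l,m}`. Finally `∑_{l ∈ S_j} p_{l,m}` lies in
`R_{S_j}`, and inverting the indicator matrix recovers every `p_{l,m}` as a rational combination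
of these sums.
-/

open Equiv MvPolynomial

def sigmaFinSuccEquiv {n : ℕ} (β : Fin (n + 1) → Type*) :
    (Σ i, β i) ≃ β 0 ⊕ Σ i : Fin n, β i.succ where
  toFun v := Fin.cases (motive := fun i => β i → β 0 ⊕ Σ i : Fin n, β i.succ)
    Sum.inl (fun i x => Sum.inr ⟨i, x⟩) v.1 v.2
  invFun := Sum.elim (Sigma.mk 0) (fun v => ⟨v.1.succ, v.2⟩)
  left_inv := by rintro ⟨i, x⟩; cases i using Fin.cases <;> rfl
  right_inv := by rintro (x | ⟨i, x⟩) <;> rfl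

theorem mem_of_isUnit_indicator {ι k V : Type*} [Fintype ι] [DecidableEq ι] [DivisionRing k]
    [CharZero k] [AddCommGroup V] [Module k V] (W : Submodule k V) {S : ι → Finset ι}
    (hS : IsUnit (Matrix.of fun i j : ι => if i ∈ S j then (1 : ℚ) else 0)) {P : ι → V}
    (hP : ∀ j, ∑ i ∈ S j, P i ∈ W) (l : ι) : P l ∈ W := by
  set M := Matrix.of fun i j : ι => if i ∈ S j then (1 : ℚ) else 0
  obtain ⟨u, hu⟩ := hS
  set N : Matrix ι ι ℚ := ↑u⁻¹
  have hMN : M * N = 1 := by rw [← hu]; exact u.mul_inv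
  have hcol (j : ι) : ∑ i ∈ S j, P i = ∑ i, (M i j : k) • P i := by
    simp [M, apply_ite (Rat.cast : ℚ → k), ite_smul, Finset.sum_ite_mem]
  suffices P l = ∑ j, (N j l : k) • ∑ i ∈ S j, P i from
    this ▸ W.sum_mem fun j _ => W.smul_mem _ (hP j)
  calc P l = ∑ i, ((1 : Matrix ι ι ℚ) i l : k) • P i := by
        simp [Matrix.one_apply, apply_ite (Rat.cast : ℚ → k), ite_smul]
    _ = ∑ i, ∑ j, (N j l : k) • (M i j : k) • P i := by
      simp only [← hMN, Matrix.mul_apply, Rat.cast_sum, Finset.sum_smul, Rat.cast_mul, mul_comm,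
        mul_smul]
    _ = ∑ j, (N j l : k) • ∑ i ∈ S j, P i := by
      rw [Finset.sum_comm]
      simp only [hcol, Finset.smul_sum]

namespace MvPolynomial

def renameInvariants (R : Type*) {σ : Type*} [CommSemiring R] (H : Set (Perm σ)) :
    Subalgebra R (MvPolynomial σ R) where
  carrier := {p | ∀ w ∈ H, rename w p = p}
  mul_mem' hp hq w hw := by rw [map_mul, hp w hw, hq w hw]
  add_mem' hp hq w hw := by rw [map_add, hp w hw, hq w hw]
  algebraMap_mem' r w _ := (rename w).commutes r

theorem rename_congr_of_forall_mem_vars {R σ τ : Type*} [CommSemiring R] {f g : σ → τ}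
    {p : MvPolynomial σ R} (h : ∀ v ∈ p.vars, f v = g v) : rename f p = rename g p :=
  hom_congr_vars (f₁ := (rename f).toRingHom) (f₂ := (rename g).toRingHom)
    (by ext; simp) (fun v hv _ => by simp [h v hv]) rfl

theorem map_aeval_esymm {R S σ : Type*} [CommSemiring R] [CommSemiring S] [Fintype σ]
    (f : R →+* S) {n : ℕ} (q : MvPolynomial (Fin n) R) :
    map f (aeval (fun i : Fin n => esymm σ R (i + 1)) q) =
      aeval (fun i : Fin n => esymm σ S (i + 1)) (map f q) := by
  rw [aeval_def, aeval_def, eval₂_map, eval₂_comp_left, algebraMap_eq, algebraMap_eq, map_comp_C]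
  simp only [Function.comp_def, map_esymm]

section SumAlgEquiv

variable {R α τ : Type*} [CommSemiring R]

theorem sumAlgEquiv_rename_sumCongr_left (e : Perm α) (p : MvPolynomial (α ⊕ τ) R) :
    sumAlgEquiv R α τ (rename (Perm.sumCongr e 1) p) = rename e (sumAlgEquiv R α τ p) := by
  have : (sumAlgEquiv R α τ).toAlgHom.comp (rename (Perm.sumCongr e 1)) =
      ((rename e).restrictScalars R).comp (sumAlgEquiv R α τ).toAlgHom := by
    ext (i | i) <;> simp
  exact DFunLike.congr_fun this p

theorem sumAlgEquiv_rename_sumCongr_right (w : Perm τ) (p : MvPolynomial (α ⊕ τ) R) :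
    sumAlgEquiv R α τ (rename (Perm.sumCongr 1 w) p) =
      map (rename w : MvPolynomial τ R →ₐ[R] _).toRingHom (sumAlgEquiv R α τ p) := by
  have : (sumAlgEquiv R α τ).toAlgHom.comp (rename (Perm.sumCongr 1 w)) =
      (mapAlgHom (rename w)).comp (sumAlgEquiv R α τ).toAlgHom := by
    ext (i | i) <;> simp
  exact DFunLike.congr_fun this p

theorem sumAlgEquiv_symm_C (c : MvPolynomial τ R) :
    (sumAlgEquiv R α τ).symm (C c) = rename Sum.inr c := by
  rw [AlgEquiv.symm_apply_eq, ← AlgEquiv.coe_toAlgHom, ← AlgHom.comp_apply,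
    sumAlgEquiv_comp_rename_inr]
  rfl

theorem sumAlgEquiv_symm_esymm [Fintype α] (n : ℕ) :
    (sumAlgEquiv R α τ).symm (esymm α (MvPolynomial τ R) n) = rename Sum.inl (esymm α R n) := by
  rw [AlgEquiv.symm_apply_eq, ← AlgEquiv.coe_toAlgHom, ← AlgHom.comp_apply,
    sumAlgEquiv_comp_rename_inl]
  exact (map_esymm _ _ n _).symm

end SumAlgEquiv

theorem mem_map_inl_sup_map_inr_of_rename_sumCongr {R α τ : Type*} [CommRing R] [Fintype α]
    {H : Set (Perm τ)} {p : MvPolynomial (α ⊕ τ) R}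
    (hα : ∀ e : Perm α, rename (Perm.sumCongr e 1) p = p)
    (hτ : ∀ w ∈ H, rename (Perm.sumCongr 1 w) p = p) :
    p ∈ (symmetricSubalgebra α R).map (rename Sum.inl) ⊔
      (renameInvariants R H).map (rename Sum.inr) := by
  set Φ := sumAlgEquiv R α τ
  have hsymm : (Φ p).IsSymmetric := fun e => by
    rw [← sumAlgEquiv_rename_sumCongr_left, hα]
  obtain ⟨q, hq⟩ := esymmAlgHom_surjective (MvPolynomial τ R) le_rfl ⟨Φ p, hsymm⟩
  replace hq : aeval (fun i : Fin _ => esymm α (MvPolynomial τ R) (i + 1)) q = Φ p := by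
    rw [← esymmAlgHom_apply, hq]
  have hcoeff (d) : q.coeff d ∈ renameInvariants R H := fun w hw => by
    have : map (rename w).toRingHom q = q := by
      refine esymmAlgHom_injective _ le_rfl (Subtype.ext ?_)
      rw [esymmAlgHom_apply, esymmAlgHom_apply, ← map_aeval_esymm, hq,
        ← sumAlgEquiv_rename_sumCongr_right, hτ w hw]
    have hd := congrArg (coeff d) this
    rwa [coeff_map] at hd
  rw [← Φ.symm_apply_apply p, ← hq, ← RingHom.coe_coe Φ.symm, map_aeval]
  refine eval₂_mem (fun d _ => Algebra.mem_sup_right ?_) (fun i => Algebra.mem_sup_left ?_)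
  · exact ⟨_, hcoeff d, (sumAlgEquiv_symm_C _).symm⟩
  · exact ⟨_, esymm_isSymmetric α R _, (sumAlgEquiv_symm_esymm _).symm⟩

theorem renameInvariants_le_iSup_map_symmetricSubalgebra (R : Type*) [CommRing R] {n : ℕ}
    (β : Fin n → Type*) [∀ i, Fintype (β i)] :
    renameInvariants R {w : Perm (Σ i, β i) | ∀ v, (w v).1 = v.1} ≤
      ⨆ i, (symmetricSubalgebra (β i) R).map (rename (Sigma.mk i)) := by
  induction n with
  | zero =>
    intro p _
    have : IsEmpty (Σ i : Fin 0, β i) := ⟨fun v => v.1.elim0⟩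
    obtain ⟨a, rfl⟩ := C_surjective _ p
    exact Subalgebra.algebraMap_mem _ a
  | succ n ih =>
    intro p hp
    set E := sigmaFinSuccEquiv β
    have hE (g : Perm (β 0 ⊕ Σ i : Fin n, β i.succ))
        (hg : ∀ u, (E.symm (g u)).1 = (E.symm u).1) : rename g (rename E p) = rename E p := by
      have := hp (E.symm.permCongr g) fun v => by simpa using hg (E v)
      conv_rhs => rw [← this]
      simp only [rename_rename]
      congr 1
      ext v
      simp [Equiv.permCongr_apply]
    have hsplit := mem_map_inl_sup_map_inr_of_rename_sumCongr (H := {w | ∀ v, (w v).1 = v.1})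
      (fun e => hE _ fun u => by rcases u with x | x <;> rfl)
      (fun w hw => hE _ fun u => by rcases u with x | x; exacts [rfl, congrArg Fin.succ (hw x)])
    suffices h : (symmetricSubalgebra (β 0) R).map (rename Sum.inl) ⊔
        (renameInvariants R {w | ∀ v, (w v).1 = v.1}).map (rename Sum.inr) ≤
        (⨆ i, (symmetricSubalgebra (β i) R).map (rename (Sigma.mk i))).comap (rename E.symm) by
      simpa [rename_rename] using h hsplit
    refine sup_le (Subalgebra.map_le.1 ?_) (Subalgebra.map_le.1 ?_)
    · rw [Subalgebra.map_map, rename_comp_rename]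
      exact le_iSup_of_le 0 le_rfl
    · refine (Subalgebra.map_mono (Subalgebra.map_mono (ih _))).trans ?_
      rw [Subalgebra.map_map, (Subalgebra.gc_map_comap _).l_iSup]
      refine iSup_le fun i => ?_
      rw [Subalgebra.map_map, rename_comp_rename, rename_comp_rename]
      exact le_iSup_of_le i.succ le_rfl

section CharZero

variable (σ k : Type*) [Fintype σ] [Field k] [CharZero k]

theorem esymm_mem_adjoin_psum (n : ℕ) :
    esymm σ k n ∈ Algebra.adjoin k (Set.range (psum σ k)) := by
  set A := Algebra.adjoin k (Set.range (psum σ k))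
  induction n using Nat.strong_induction_on with
  | _ n ih =>
  rcases n.eq_zero_or_pos with rfl | hn
  · simpa only [esymm_zero] using A.one_mem
  have hsign (m : ℕ) : ((-1) ^ m : MvPolynomial σ k) ∈ A := A.pow_mem (A.neg_mem A.one_mem) m
  have hnewton : (n : MvPolynomial σ k) * esymm σ k n ∈ A := by
    rw [mul_esymm_eq_sum]
    refine A.mul_mem (hsign _) (A.sum_mem fun a ha => ?_)
    exact A.mul_mem (A.mul_mem (hsign _) (ih a.1 (Finset.mem_filter.1 ha).2))
      (Algebra.subset_adjoin ⟨a.2, rfl⟩)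
  have hn0 : (n : k) ≠ 0 := Nat.cast_ne_zero.2 hn.ne'
  convert A.smul_mem hnewton (n : k)⁻¹ using 1
  rw [Algebra.smul_def, ← mul_assoc, ← map_natCast (algebraMap k (MvPolynomial σ k)), ← map_mul,
    inv_mul_cancel₀ hn0, map_one, one_mul]

theorem symmetricSubalgebra_le_adjoin_psum :
    symmetricSubalgebra σ k ≤ Algebra.adjoin k (Set.range (psum σ k)) := by
  intro p hp
  obtain ⟨q, hq⟩ := esymmAlgHom_surjective k le_rfl ⟨p, hp⟩
  have hpq : p = aeval (fun i : Fin (Fintype.card σ) => esymm σ k (i + 1)) q := by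
    rw [← esymmAlgHom_apply, hq]
  have : p ∈ Algebra.adjoin k (Set.range fun i : Fin (Fintype.card σ) => esymm σ k (i + 1)) := by
    rw [hpq, ← aeval_range]
    exact ⟨q, rfl⟩
  exact Algebra.adjoin_le (Set.range_subset_iff.2 fun i => esymm_mem_adjoin_psum σ k _) this

end CharZero

section PartialSymmetric

variable (R : Type*) [CommSemiring R] {ι : Type*} (β : ι → Type*)

def partialSymmetric (S : Finset ι) : Set (MvPolynomial (Σ i, β i) R) :=
  {p | (∀ v ∈ p.vars, v.1 ∈ S) ∧
    ∀ σ : Perm (Σ i, β i), (∀ v : Σ i, β i, v.1 ∉ S → σ v = v) → rename σ p = p}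

variable {R β}

theorem partialSymmetric_subset_renameInvariants (S : Finset ι) :
    partialSymmetric R β S ⊆ renameInvariants R {w : Perm (Σ i, β i) | ∀ v, (w v).1 = v.1} := by
  classical
  rintro p ⟨hvars, hfix⟩ w hw
  let w' : Perm (Σ i, β i) :=
    Perm.ofSubtype (w.subtypePerm (p := fun v => v.1 ∈ S) fun v => by rw [hw v])
  calc rename w p = rename w' p := rename_congr_of_forall_mem_vars fun v hv => by
        simp [w', Perm.ofSubtype_apply_of_mem, hvars v hv]
    _ = p := hfix w' fun v hv => Perm.ofSubtype_apply_of_not_mem _ hv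

theorem sum_rename_psum_mem_partialSymmetric [∀ i, Fintype (β i)] (S : Finset ι) (m : ℕ) :
    ∑ l ∈ S, rename (Sigma.mk l) (psum (β l) R m) ∈ partialSymmetric R β S := by
  classical
  refine ⟨fun v hv => ?_, fun w hw => ?_⟩
  · obtain ⟨l, hl, hv⟩ := Finset.mem_biUnion.1 (vars_sum_subset _ _ hv)
    obtain ⟨x, -, rfl⟩ := mem_vars_rename _ _ hv
    exact hl
  · have hsum : ∑ l ∈ S, rename (Sigma.mk l) (psum (β l) R m) =
        ∑ v ∈ S.sigma fun _ => Finset.univ, X v ^ m := by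
      simp [psum, Finset.sum_sigma]
    rw [hsum, map_sum]
    simp only [map_pow, rename_X]
    refine w.sum_comp _ (fun v => X v ^ m) fun v hv => ?_
    simpa using not_imp_comm.1 (hw v) hv

end PartialSymmetric

end MvPolynomial

theorem adjoin_partial_symmetric_eq_invariants_general (k : Type*) [Field k] [CharZero k]
    (κ : ℕ) (r : Fin κ → ℕ)
    (S : Fin κ → Finset (Fin κ))
    (hS : IsUnit (Matrix.of fun i j : Fin κ => if i ∈ S j then (1 : ℚ) else 0)) :
    (Algebra.adjoin k (⋃ j : Fin κ,
        {p : MvPolynomial (Σ l : Fin κ, Fin (r l)) k |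
          (∀ v ∈ p.vars, v.1 ∈ S j) ∧
          ∀ σ : Equiv.Perm (Σ l : Fin κ, Fin (r l)),
            (∀ v : Σ l : Fin κ, Fin (r l), v.1 ∉ S j → σ v = v) →
            MvPolynomial.rename σ p = p}) : Set (MvPolynomial (Σ l : Fin κ, Fin (r l)) k))
      = {p : MvPolynomial (Σ l : Fin κ, Fin (r l)) k |
          ∀ σ : Equiv.Perm (Σ l : Fin κ, Fin (r l)),
            (∀ v : Σ l : Fin κ, Fin (r l), (σ v).1 = v.1) →
            MvPolynomial.rename σ p = p} := by
  set A := Algebra.adjoin k (⋃ j, partialSymmetric k (fun l => Fin (r l)) (S j))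
  change (A : Set (MvPolynomial (Σ l, Fin (r l)) k)) =
    ↑(renameInvariants k {w : Perm (Σ l, Fin (r l)) | ∀ v, (w v).1 = v.1})
  refine congrArg SetLike.coe (le_antisymm ?_ ?_)
  · exact Algebra.adjoin_le (Set.iUnion_subset fun j => partialSymmetric_subset_renameInvariants _)
  have hpsum (l : Fin κ) (m : ℕ) : rename (Sigma.mk l) (psum (Fin (r l)) k m) ∈ A :=
    mem_of_isUnit_indicator (Subalgebra.toSubmodule A) hS (fun j => Algebra.subset_adjoin
      (Set.mem_iUnion_of_mem j (sum_rename_psum_mem_partialSymmetric (S j) m))) l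
  refine (renameInvariants_le_iSup_map_symmetricSubalgebra k _).trans (iSup_le fun l => ?_)
  refine Subalgebra.map_le.2 ((symmetricSubalgebra_le_adjoin_psum _ k).trans ?_)
  exact Algebra.adjoin_le (Set.range_subset_iff.2 (hpsum l))

/-- if the indicator matrix of the subsets `S 1, …, S κ` is invertible
over `ℚ`, then the subalgebra generated by the partial symmetric algebras `R_{S_j}` is the
whole algebra of `𝔖_{r_1} × ⋯ × 𝔖_{r_κ}`-invariants. -/
theorem adjoin_partial_symmetric_eq_invariants (k : Type*) [Field k] [CharZero k]
    (κ : ℕ) (hκ : 1 ≤ κ) (r : Fin κ → ℕ) (hr : ∀ l, 0 < r l)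
    (S : Fin κ → Finset (Fin κ))
    (hS : IsUnit (Matrix.of fun i j : Fin κ => if i ∈ S j then (1 : ℚ) else 0)) :
    (Algebra.adjoin k (⋃ j : Fin κ,
        {p : MvPolynomial (Σ l : Fin κ, Fin (r l)) k |
          (∀ v ∈ p.vars, v.1 ∈ S j) ∧
          ∀ σ : Equiv.Perm (Σ l : Fin κ, Fin (r l)),
            (∀ v : Σ l : Fin κ, Fin (r l), v.1 ∉ S j → σ v = v) →
            MvPolynomial.rename σ p = p}) : Set (MvPolynomial (Σ l : Fin κ, Fin (r l)) k))
      = {p : MvPolynomial (Σ l : Fin κ, Fin (r l)) k |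
          ∀ σ : Equiv.Perm (Σ l : Fin κ, Fin (r l)),
            (∀ v : Σ l : Fin κ, Fin (r l), (σ v).1 = v.1) →
            MvPolynomial.rename σ p = p} :=
  adjoin_partial_symmetric_eq_invariants_general k κ r S hS
end

section
/- Let n ≥ 1 and 2 ≤ l ≤ n. Order the set {1,1̄,…,n,n̄} by 1 < 1̄ < 2 < 2̄ < … < n < n̄. Call a subset I = {i_1 < … < i_l} of this set allowed if there is no pair a < b (a,b ∈ {1,…,n} and b a position index ≤ l) with i_b = ā. Then the number of allowed l-element subsets equals C(2n,l) − C(2n,l−2), where C denotes the binomial coefficient. -/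
open Finset
open scoped Classical

namespace Paper

/-!
Encode `1 < 1̄ < 2 < 2̄ < …` as `0 < 1 < 2 < 3 < …`. Adding the top element `N` to a set
`J ⊆ {0, …, N - 1}` changes no rank below `N`, so `insert N J` is forbidden only if `J` is, or
through `N` itself: `N = ā` is odd and `a < |J| + 1`. Hence the number `A(N, l)` of allowed
`l`-subsets of `{0, …, N - 1}` satisfies `A(N + 1, l + 1) = A(N, l + 1) + A(N, l)`, except that
the second term is dropped when `N` is odd and `N + 1 < 2(l + 1)`. Induction on `N` then gives
`A(N, l) = 0` for `N + 1 < 2l` and `A(N, l) + C(N, l - 2) = C(N, l)` for `4 ≤ 2l ≤ N + 2`, both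
sides obeying Pascal's rule.
-/

/-- `v = 2a - 1` codes `ā`, and `#{x ∈ I | x ≤ v}` is its position `b` in `I`, so the last
conjunct says `a < b`. -/
def RankForbidden (I : Finset ℕ) : Prop :=
  ∃ v ∈ I, v % 2 = 1 ∧ v + 1 < 2 * #{x ∈ I | x ≤ v}

noncomputable def allowedSets (N l : ℕ) : Finset (Finset ℕ) :=
  {I ∈ powersetCard l (range N) | ¬ RankForbidden I}

theorem card_filter_le_sort_getElem {α : Type*} [LinearOrder α] (s : Finset α) {p : ℕ}
    (hp : p < s.sort.length) : #{x ∈ s | x ≤ s.sort[p]} = p + 1 := by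
  have hmono : StrictMono s.sort.get := s.sortedLT_sort.strictMono_get
  have hfilter : {x ∈ s | x ≤ s.sort[p]} = (Iic (⟨p, hp⟩ : Fin _)).map ⟨_, hmono.injective⟩ := by
    ext x
    simp only [mem_filter, mem_map, mem_Iic, Function.Embedding.coeFn_mk]
    constructor
    · rintro ⟨hx, hxp⟩
      obtain ⟨q, rfl⟩ := List.mem_iff_get.mp ((mem_sort (· ≤ ·)).mpr hx)
      exact ⟨q, hmono.le_iff_le.mp hxp, rfl⟩
    · rintro ⟨q, hq, rfl⟩
      exact ⟨(mem_sort (· ≤ ·)).mp (List.get_mem _ q), hmono.monotone hq⟩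
  rw [hfilter, card_map, Fin.card_Iic]

theorem forbidden_iff_rankForbidden {N : ℕ} (I : Finset (Fin N)) :
    Forbidden I ↔ RankForbidden (I.map Fin.valEmbedding) := by
  set s := I.map Fin.valEmbedding
  have hlen : s.sort.length = #I := by rw [length_sort, card_map]
  have helem : ∀ p, elemV I p = s.sort.getD p 0 := fun p =>
    congrArg (List.getD · p 0)
      ((Fin.val_strictMono.strictMonoOn (I : Set (Fin N))).map_finsetSort (f := Fin.valEmbedding))
  constructor
  · rintro ⟨a, b, ha, hab, hb, hv⟩
    have hp : b - 1 < s.sort.length := by omega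
    rw [helem, List.getD_eq_getElem _ _ hp] at hv
    refine ⟨_, (mem_sort (· ≤ ·)).mp (List.getElem_mem hp), by omega, ?_⟩
    rw [card_filter_le_sort_getElem s hp]
    omega
  · rintro ⟨v, hv, hodd, hrank⟩
    obtain ⟨p, hp, rfl⟩ := List.mem_iff_getElem.mp ((mem_sort (· ≤ ·)).mpr hv)
    rw [card_filter_le_sort_getElem s hp] at hrank
    refine ⟨(s.sort[p] + 1) / 2, p + 1, by omega, by omega, by omega, ?_⟩
    rw [helem, Nat.add_sub_cancel, List.getD_eq_getElem _ _ hp]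
    omega

theorem rankForbidden_insert_of_forall_lt {J : Finset ℕ} {N : ℕ} (hJ : ∀ x ∈ J, x < N) :
    RankForbidden (insert N J) ↔ RankForbidden J ∨ (N % 2 = 1 ∧ N + 1 < 2 * (#J + 1)) := by
  have hN : N ∉ J := fun h => (hJ N h).false
  have hbelow : ∀ v ∈ J, {x ∈ insert N J | x ≤ v} = {x ∈ J | x ≤ v} := fun v hv => by
    rw [filter_insert, if_neg (hJ v hv).not_ge]
  have htop : {x ∈ insert N J | x ≤ N} = insert N J :=
    filter_true_of_mem fun x hx => (mem_insert.mp hx).elim le_of_eq fun h => (hJ x h).le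
  simp only [RankForbidden, exists_mem_insert, htop, card_insert_of_notMem hN]
  rw [or_comm]
  refine or_congr_left (exists_congr fun v => and_congr_right fun hv => ?_)
  rw [hbelow v hv]

theorem card_allowedSets_zero_right (N : ℕ) : #(allowedSets N 0) = 1 := by
  rw [allowedSets, powersetCard_zero, filter_singleton, if_pos]
  · rfl
  · rintro ⟨v, hv, -⟩
    exact notMem_empty v hv

theorem card_allowedSets_succ_succ (N l : ℕ) :
    #(allowedSets (N + 1) (l + 1)) = #(allowedSets N (l + 1)) +
      if N % 2 = 1 ∧ N + 1 < 2 * (l + 1) then 0 else #(allowedSets N l) := by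
  have hN : N ∉ range N := notMem_range_self
  have hinj : Set.InjOn (insert N) (powersetCard l (range N) : Set (Finset ℕ)) :=
    fun J hJ K hK h => by
      rw [← erase_insert (fun h => hN (mem_powersetCard.mp hJ |>.1 h)),
        ← erase_insert (fun h => hN (mem_powersetCard.mp hK |>.1 h)), h]
  have hdisj : Disjoint (powersetCard (l + 1) (range N))
      ((powersetCard l (range N)).image (insert N)) := by
    refine disjoint_left.mpr fun I hI hI' => ?_
    obtain ⟨J, -, rfl⟩ := mem_image.mp hI'
    exact hN (mem_powersetCard.mp hI |>.1 (mem_insert_self N J))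
  have hnew : {J ∈ powersetCard l (range N) | ¬ RankForbidden (insert N J)} =
      if N % 2 = 1 ∧ N + 1 < 2 * (l + 1) then ∅ else allowedSets N l := by
    have hiff : ∀ J ∈ powersetCard l (range N), ¬ RankForbidden (insert N J) ↔
        ¬ (N % 2 = 1 ∧ N + 1 < 2 * (l + 1)) ∧ ¬ RankForbidden J := fun J hJ => by
      obtain ⟨hsub, hcard⟩ := mem_powersetCard.mp hJ
      rw [rankForbidden_insert_of_forall_lt fun x hx => mem_range.mp (hsub hx), hcard]
      tauto
    rw [filter_congr hiff]
    split_ifs with hc <;> simp [hc, allowedSets]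
  rw [allowedSets, range_add_one, powersetCard_succ_insert hN, filter_union,
    card_union_of_disjoint (disjoint_filter_filter hdisj), filter_image,
    card_image_of_injOn (hinj.mono (filter_subset _ _)), hnew, apply_ite card, card_empty]
  rfl

theorem card_allowedSets_zero_succ (l : ℕ) : #(allowedSets 0 (l + 1)) = 0 := by
  simp [allowedSets]

theorem card_allowedSets_one (N : ℕ) : #(allowedSets N 1) = N := by
  induction N with
  | zero => exact card_allowedSets_zero_succ 0
  | succ N ih =>
    rw [card_allowedSets_succ_succ, if_neg (by omega), ih, card_allowedSets_zero_right]

theorem card_allowedSets_eq_zero {N l : ℕ} (h : N + 1 < 2 * l) : #(allowedSets N l) = 0 := by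
  obtain ⟨l, rfl⟩ : ∃ l', l = l' + 1 := ⟨l - 1, by omega⟩
  induction N generalizing l with
  | zero => exact card_allowedSets_zero_succ l
  | succ N ih =>
    rw [card_allowedSets_succ_succ, ih l (by omega)]
    split_ifs with hc
    · rfl
    · obtain ⟨l, rfl⟩ : ∃ l', l = l' + 1 := ⟨l - 1, by omega⟩
      rw [zero_add]
      exact ih l (by omega)

theorem card_allowedSets_add_choose {N k : ℕ} (h : 2 * k + 2 ≤ N) :
    #(allowedSets N (k + 2)) + N.choose k = N.choose (k + 2) := by
  induction N generalizing k with
  | zero => omega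
  | succ N ih =>
    rw [card_allowedSets_succ_succ]
    split_ifs with hc
    · rw [card_allowedSets_eq_zero (by omega), zero_add, zero_add]
      exact Nat.choose_symm_of_eq_add (by omega)
    · have hk2 := ih (k := k) (by omega)
      rcases k with _ | k
      · have h1 := card_allowedSets_one N
        simp only [zero_add, Nat.reduceAdd, Nat.choose_zero_right, Nat.choose_succ_succ' N 1,
          Nat.choose_one_right] at hk2 h1 ⊢
        omega
      · have hk1 := ih (k := k) (by omega)
        simp only [add_assoc, Nat.reduceAdd, Nat.choose_succ_succ' N] at hk1 hk2 ⊢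
        omega

theorem card_filter_not_forbidden (N l : ℕ) :
    #{I : Finset (Fin N) | I.card = l ∧ ¬ Forbidden I} = #(allowedSets N l) := by
  rw [allowedSets, ← Nat.Iio_eq_range, ← Fin.map_valEmbedding_univ, powersetCard_map,
    filter_map, card_map, powersetCard_eq_filter, powerset_univ, filter_filter]
  simp only [Function.comp_apply, RelEmbedding.coe_toEmbedding, mapEmbedding_apply,
    forbidden_iff_rankForbidden]
  congr

theorem card_allowed_subsets_general (n l : ℕ) (hl : 2 ≤ l) (hln : l ≤ n) :
    ((Finset.univ : Finset (Finset (Fin (2 * n)))).filter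
        (fun I => I.card = l ∧ ¬ Forbidden I)).card
      = Nat.choose (2 * n) l - Nat.choose (2 * n) (l - 2) := by
  obtain ⟨k, rfl⟩ : ∃ k, l = k + 2 := ⟨l - 2, by omega⟩
  have hcount := card_allowedSets_add_choose (N := 2 * n) (k := k) (by omega)
  rw [card_filter_not_forbidden, Nat.add_sub_cancel]
  omega

/-- the number of allowed `l`-element subsets of `{1,1̄,…,n,n̄}` equals
`C(2n,l) - C(2n,l-2)`. -/
theorem card_allowed_subsets (n l : ℕ) (hn : 1 ≤ n) (hl : 2 ≤ l) (hln : l ≤ n) :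
    ((Finset.univ : Finset (Finset (Fin (2 * n)))).filter
        (fun I => I.card = l ∧ ¬ Forbidden I)).card
      = Nat.choose (2 * n) l - Nat.choose (2 * n) (l - 2) :=
  card_allowed_subsets_general n l hl hln

end Paper
end

section
/- Let k be a field and n ≥ 2. Consider the polynomial ring k[z_{uv}^{(m)} : u,v ∈ {1,…,n,1̄,…,n̄}, m ∈ ℕ] and the power series z_{uv}(s) = Σ_m z_{uv}^{(m)} s^m. Let I be the ideal generated by all s-coefficients of the series Σ_{l=1}^n (z_{lu}(s) z_{l̄ v}(s) − z_{l̄ u}(s) z_{lv}(s)) − ε_{uv}, for all u,v, where ε_{uv} = 1 if v = ū, −1 if u = v̄, and 0 otherwise. Then I has trivial intersection with the polynomial subalgebra generated by the variables z_{uv}^{(m)} with v ∈ {1,…,n} and (u,v) not of the form (k̄, l) with k < l (k,l ∈ {1,…,n}). -/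
/-!
An element of the ideal that lies in the subalgebra is killed by every point of the arc
space of `Sp_{2n}`, so it suffices to find one point, over the fraction field `𝕂` of the
polynomial ring, at which every generator `z_{uv}^{(m)}` of the subalgebra takes its own value:
evaluation at it is then the inclusion on the subalgebra and zero on the ideal.

Such a point is a symplectic matrix `W` over `𝕂⟦s⟧` whose allowed entries are the generic
series `z_{uv}(s)`. In block form (rows and columns `l`, then `l̄`) take
`W = [[A, 0], [B, A⁻ᵀ]]`, which is symplectic as soon as `AᵀB` is symmetric. Here `A` is the
generic matrix, and the lower triangle of `B` is generic too; the strictly upper part of `B` is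
solved column by column from the symmetry of `AᵀB`. Each step is a linear system whose matrix
is a leading principal block of `Aᵀ`. That block is invertible because its constant term has a
nonzero determinant (it specialises to `1`).
-/

open Finset
open scoped Classical

namespace Paper

/-- The generic `2n × 2n` matrix of power series: the arc-space coordinates of the
`2n × 2n` matrix space, rows and columns indexed by `{1,1̄,…,n,n̄}`. -/
noncomputable def genZSp (k : Type*) [CommSemiring k] (n : ℕ) :
    Matrix (Fin (2 * n)) (Fin (2 * n))
      (PowerSeries (MvPolynomial (Fin (2 * n) × Fin (2 * n) × ℕ) k)) :=
  Matrix.of fun u v => PowerSeries.mk fun m => MvPolynomial.X (u, v, m)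

/-- The defining series relations of the arc space of `Sp_{2n}`. -/
noncomputable def spRelSeries (k : Type*) [Field k] (n : ℕ) (u v : Fin (2 * n)) :
    PowerSeries (MvPolynomial (Fin (2 * n) × Fin (2 * n) × ℕ) k) :=
  (∑ l : Fin n, (genZSp k n (emb0 l) u * genZSp k n (emb1 l) v
    - genZSp k n (emb1 l) u * genZSp k n (emb0 l) v)) - eps u v

open Matrix

section LeadingBlock

variable {R : Type*} [CommRing R] {n : ℕ}

/-- The leading `l × l` block of `A`, padded with the identity to stay `n × n`. -/
def leadingBlock (A : Matrix (Fin n) (Fin n) R) (l : ℕ) : Matrix (Fin n) (Fin n) R :=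
  Matrix.of fun i j => if i.1 < l ∧ j.1 < l then A i j else if i = j then 1 else 0

theorem leadingBlock_of_le (A : Matrix (Fin n) (Fin n) R) {l : ℕ} (hl : n ≤ l) :
    leadingBlock A l = A := by
  ext i j
  simp [leadingBlock, show i.1 < l by omega, show j.1 < l by omega]

@[simp]
theorem leadingBlock_one (l : ℕ) : leadingBlock (1 : Matrix (Fin n) (Fin n) R) l = 1 := by
  ext i j
  by_cases h : i = j <;> simp [leadingBlock, one_apply, h]

theorem map_leadingBlock {S : Type*} [CommRing S] (f : R →+* S) (A : Matrix (Fin n) (Fin n) R)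
    (l : ℕ) : (leadingBlock A l).map f = leadingBlock (A.map f) l := by
  ext i j
  simp only [leadingBlock, map_apply, of_apply]
  split_ifs <;> simp

theorem exists_leadingBlock_solution (A : Matrix (Fin n) (Fin n) R) {l : ℕ}
    (hA : IsUnit (leadingBlock A l).det) (r : Fin n → R) :
    ∃ x : Fin n → R, ∀ j : Fin n, j.1 < l →
      ∑ i, (if i.1 < l then A i j * x i else 0) = r j := by
  refine ⟨(leadingBlock A l)ᵀ⁻¹ *ᵥ r, fun j hj => ?_⟩
  have hsol := congrFun (mulVec_mulVec r (leadingBlock A l)ᵀ (leadingBlock A l)ᵀ⁻¹) j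
  rw [mul_nonsing_inv _ (by rwa [det_transpose]), one_mulVec] at hsol
  rw [← hsol]
  refine Finset.sum_congr rfl fun i _ => ?_
  by_cases hi : i.1 < l
  · simp [leadingBlock, hi, hj]
  · have hij : i ≠ j := fun h => hi (h ▸ hj)
    simp [leadingBlock, hi, hij]

end LeadingBlock

section SymmetricCompletion

variable {R : Type*} [CommRing R] {n : ℕ}

theorem exists_updateCol_transpose_mul_symm (A B G : Matrix (Fin n) (Fin n) R) (c : Fin n)
    (hA : IsUnit (leadingBlock A c).det) :
    ∃ B' : Matrix (Fin n) (Fin n) R, (∀ i j, j ≠ c → B' i j = B i j) ∧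
      (∀ i, c ≤ i → B' i c = G i c) ∧ ∀ j, j < c → (Aᵀ * B') j c = (Aᵀ * B') c j := by
  -- `x` is the strictly upper part of the new column `c`; its known lower part is moved to `r`.
  obtain ⟨x, hx⟩ := exists_leadingBlock_solution A hA fun j =>
    ∑ i, B i j * A i c - ∑ i, if c ≤ i then A i j * G i c else 0
  refine ⟨B.updateCol c fun i => if i < c then x i else G i c, fun i j hj => by simp [hj],
    fun i hi => by simp [not_lt.2 hi], fun j hj => ?_⟩
  have hsplit : ∀ i, A i j * (if i < c then x i else G i c)
      = (if i.1 < c.1 then A i j * x i else 0) + if c ≤ i then A i j * G i c else 0 := by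
    intro i
    by_cases hi : i < c
    · simp [hi, Fin.lt_def.1 hi, not_le.2 hi]
    · simp [hi, not_lt.1 hi]
  simp only [mul_apply, transpose_apply, updateCol_self, updateCol_ne hj.ne, hsplit,
    Finset.sum_add_distrib, hx j hj]
  simp only [sub_add_cancel, mul_comm]

theorem exists_lower_eq_transpose_mul_isSymm (A G : Matrix (Fin n) (Fin n) R)
    (hA : ∀ l, IsUnit (leadingBlock A l).det) :
    ∃ B : Matrix (Fin n) (Fin n) R, (∀ i j, j ≤ i → B i j = G i j) ∧ (Aᵀ * B).IsSymm := by
  have hcolumns : ∀ l : ℕ, ∃ B : Matrix (Fin n) (Fin n) R, (∀ i j, j ≤ i → B i j = G i j) ∧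
      ∀ i j : Fin n, i < j → j.1 < l → (Aᵀ * B) i j = (Aᵀ * B) j i := by
    intro l
    induction l with
    | zero => exact ⟨G, fun _ _ _ => rfl, fun _ _ _ h => absurd h (Nat.not_lt_zero _)⟩
    | succ l ih =>
      obtain ⟨B, hBG, hBsymm⟩ := ih
      by_cases hl : l < n
      swap
      · exact ⟨B, hBG, fun i j hij hj => hBsymm i j hij (by omega)⟩
      set c : Fin n := ⟨l, hl⟩
      obtain ⟨B', hoff, hcol, hsymm⟩ := exists_updateCol_transpose_mul_symm A B G c (hA l)
      have hcolumn : ∀ i j, j ≠ c → (Aᵀ * B') i j = (Aᵀ * B) i j := fun i j hj => by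
        simp only [mul_apply, hoff _ _ hj]
      refine ⟨B', fun i j hji => ?_, fun i j hij hj => ?_⟩
      · by_cases hj : j = c
        · subst hj; exact hcol i hji
        · rw [hoff i j hj, hBG i j hji]
      · by_cases hjc : j = c
        · subst hjc; exact hsymm i hij
        · have hjl : j.1 < l := by
            have : j.1 ≠ l := fun h => hjc (Fin.ext h)
            omega
          have hic : i ≠ c := (hij.trans (show j < c from hjl)).ne
          rw [hcolumn i j hjc, hcolumn j i hic, hBsymm i j hij hjl]
  obtain ⟨B, hBG, hBsymm⟩ := hcolumns n
  refine ⟨B, hBG, Matrix.IsSymm.ext fun i j => ?_⟩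
  rcases lt_trichotomy i j with h | rfl | h
  · exact (hBsymm i j h j.2).symm
  · rfl
  · exact hBsymm j i h i.2

end SymmetricCompletion

section Symplectic

variable {n : ℕ}

def parityEquiv : Fin n ⊕ Fin n ≃ Fin (2 * n) where
  toFun := Sum.elim emb0 emb1
  invFun u := if u.1 % 2 = 0 then .inl ⟨u.1 / 2, by omega⟩ else .inr ⟨u.1 / 2, by omega⟩
  left_inv x := by rcases x with a | a <;> simp [emb0, emb1, Fin.ext_iff]; omega
  right_inv u := by
    by_cases h : u.1 % 2 = 0 <;> simp only [h, if_true, if_false] <;> ext <;>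
      simp [emb0, emb1] <;> omega

@[simp] theorem parityEquiv_inl (a : Fin n) : parityEquiv (.inl a) = emb0 a := rfl

@[simp] theorem parityEquiv_inr (a : Fin n) : parityEquiv (.inr a) = emb1 a := rfl

@[simp] theorem parityEquiv_symm_emb0 (a : Fin n) : parityEquiv.symm (emb0 a) = .inl a :=
  parityEquiv.symm_apply_apply (.inl a)

@[simp] theorem parityEquiv_symm_emb1 (a : Fin n) : parityEquiv.symm (emb1 a) = .inr a :=
  parityEquiv.symm_apply_apply (.inr a)

variable {R : Type*} [CommRing R]

@[simp] theorem eps_emb0_emb0 (a b : Fin n) : eps (R := R) (emb0 a) (emb0 b) = 0 := by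
  rw [eps, if_neg (by simp only [emb0]; omega), if_neg (by simp only [emb0]; omega)]

@[simp] theorem eps_emb1_emb1 (a b : Fin n) : eps (R := R) (emb1 a) (emb1 b) = 0 := by
  rw [eps, if_neg (by simp only [emb1]; omega), if_neg (by simp only [emb1]; omega)]

@[simp] theorem eps_emb0_emb1 (a b : Fin n) :
    eps (R := R) (emb0 a) (emb1 b) = (1 : Matrix (Fin n) (Fin n) R) a b := by
  rcases eq_or_ne a b with rfl | h
  · rw [eps, if_pos (by simp [emb0, emb1]), one_apply_eq]
  · have := Fin.val_ne_of_ne h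
    rw [eps, if_neg (by simp only [emb0, emb1]; omega),
      if_neg (by simp only [emb0, emb1]; omega), one_apply_ne h]

@[simp] theorem eps_emb1_emb0 (a b : Fin n) :
    eps (R := R) (emb1 a) (emb0 b) = -(1 : Matrix (Fin n) (Fin n) R) a b := by
  rcases eq_or_ne a b with rfl | h
  · rw [eps, if_neg (by simp only [emb0, emb1]; omega), if_pos (by simp [emb0, emb1]),
      one_apply_eq]
  · have := Fin.val_ne_of_ne h
    rw [eps, if_neg (by simp only [emb0, emb1]; omega),
      if_neg (by simp only [emb0, emb1]; omega), one_apply_ne h, neg_zero]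

/-- `Wᵀ Ω W = Ω` for the form pairing `l` with `l̄`: the relations `spRelSeries` at `z = W`. -/
def IsSymplecticMatrix (W : Matrix (Fin (2 * n)) (Fin (2 * n)) R) : Prop :=
  ∀ u v, ∑ l : Fin n, (W (emb0 l) u * W (emb1 l) v - W (emb1 l) u * W (emb0 l) v) = eps u v

def symplecticBlocks (A B Y : Matrix (Fin n) (Fin n) R) :
    Matrix (Fin (2 * n)) (Fin (2 * n)) R :=
  (fromBlocks A 0 B Y).submatrix parityEquiv.symm parityEquiv.symm

variable (A B Y : Matrix (Fin n) (Fin n) R) (i j : Fin n)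

@[simp] theorem symplecticBlocks_emb0_emb0 :
    symplecticBlocks A B Y (emb0 i) (emb0 j) = A i j := by
  simp [symplecticBlocks]

@[simp] theorem symplecticBlocks_emb0_emb1 :
    symplecticBlocks A B Y (emb0 i) (emb1 j) = 0 := by
  simp [symplecticBlocks]

@[simp] theorem symplecticBlocks_emb1_emb0 :
    symplecticBlocks A B Y (emb1 i) (emb0 j) = B i j := by
  simp [symplecticBlocks]

@[simp] theorem symplecticBlocks_emb1_emb1 :
    symplecticBlocks A B Y (emb1 i) (emb1 j) = Y i j := by
  simp [symplecticBlocks]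

theorem isSymplecticMatrix_symplecticBlocks (hAB : (Aᵀ * B).IsSymm) (hAY : Aᵀ * Y = 1) :
    IsSymplecticMatrix (symplecticBlocks A B Y) := by
  have hYA : Yᵀ * A = 1 := by simpa using congrArg transpose hAY
  intro u v
  obtain ⟨x, rfl⟩ := parityEquiv.surjective u
  obtain ⟨y, rfl⟩ := parityEquiv.surjective v
  rcases x with a | a <;> rcases y with b | b
  · simpa [Finset.sum_sub_distrib, mul_apply, mul_comm, sub_eq_zero] using hAB.apply b a
  · simp [← hAY, mul_apply]
  · simp [← hYA, mul_apply]
  · simp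

end Symplectic

theorem isUnit_det_iff_constantCoeff {R ι : Type*} [CommRing R] [Fintype ι] [DecidableEq ι]
    (M : Matrix ι ι (PowerSeries R)) :
    IsUnit M.det ↔ IsUnit (M.map PowerSeries.constantCoeff).det := by
  rw [PowerSeries.isUnit_iff_constantCoeff, RingHom.map_det]
  rfl

theorem det_leadingBlock_X_ne_zero {R σ : Type*} [CommRing R] [Nontrivial R] {n : ℕ}
    (g : Fin n → Fin n → σ) (hg : Function.Injective (Function.uncurry g)) (l : ℕ) :
    (leadingBlock (Matrix.of fun i j => (MvPolynomial.X (g i j) : MvPolynomial σ R)) l).det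
      ≠ 0 := by
  intro h
  set x : σ → R := fun w => if ∃ i, w = g i i then 1 else 0
  have hx : (Matrix.of fun i j => (MvPolynomial.X (g i j) : MvPolynomial σ R)).map
      (MvPolynomial.eval x) = 1 := by
    ext i j
    have hdiag : (∃ i', g i j = g i' i') ↔ i = j := by
      refine ⟨fun ⟨i', hi'⟩ => ?_, fun h => ⟨i, h ▸ rfl⟩⟩
      have := @hg (i, j) (i', i') hi'
      simp only [Prod.mk.injEq] at this
      rw [this.1, this.2]
    simp [x, hdiag, one_apply]
  have := congrArg (MvPolynomial.eval x) h
  rw [RingHom.map_det, RingHom.mapMatrix_apply, map_leadingBlock, hx, leadingBlock_one,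
    det_one, map_zero] at this
  exact one_ne_zero this

section Specialization

variable {n : ℕ}

noncomputable def arcEval (k : Type*) [Field k] {S : Type*} [CommRing S] [Algebra k S]
    (W : Matrix (Fin (2 * n)) (Fin (2 * n)) (PowerSeries S)) :
    MvPolynomial (Fin (2 * n) × Fin (2 * n) × ℕ) k →ₐ[k] S :=
  MvPolynomial.aeval fun w => PowerSeries.coeff w.2.2 (W w.1 w.2.1)

theorem map_eps {R S : Type*} [CommRing R] [CommRing S] (f : R →+* S) (u v : Fin (2 * n)) :
    f (eps u v) = eps u v := by
  unfold eps; split_ifs <;> simp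

theorem span_spRelSeries_coeff_le_ker_arcEval {k S : Type*} [Field k] [CommRing S]
    [Algebra k S] {W : Matrix (Fin (2 * n)) (Fin (2 * n)) (PowerSeries S)}
    (hW : IsSymplecticMatrix W) :
    Ideal.span {q | ∃ (u v : Fin (2 * n)) (m : ℕ),
      q = PowerSeries.coeff (R := MvPolynomial (Fin (2 * n) × Fin (2 * n) × ℕ) k) m
        (spRelSeries k n u v)} ≤ RingHom.ker (arcEval k W) := by
  have hgen : ∀ u v, PowerSeries.map (arcEval k W : _ →+* S) (genZSp k n u v) = W u v := by
    intro u v; ext m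
    simp [genZSp, arcEval, PowerSeries.coeff_map]
  rw [Ideal.span_le]
  rintro q ⟨u, v, m, rfl⟩
  have hrel : PowerSeries.map (arcEval k W : _ →+* S) (spRelSeries k n u v) = 0 := by
    simp only [spRelSeries, map_sub, map_sum, map_mul, hgen, map_eps, hW u v, sub_self]
  simpa [PowerSeries.coeff_map] using congrArg (PowerSeries.coeff m) hrel

end Specialization

section Generic

variable (k : Type*) [Field k] (n : ℕ)

local notation "R₀" => MvPolynomial (Fin (2 * n) × Fin (2 * n) × ℕ) k
local notation "𝕂" => FractionRing R₀

noncomputable def genericSp : Matrix (Fin (2 * n)) (Fin (2 * n)) (PowerSeries 𝕂) :=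
  (genZSp k n).map (PowerSeries.map (algebraMap R₀ 𝕂))

theorem coeff_genericSp (u v : Fin (2 * n)) (m : ℕ) :
    PowerSeries.coeff m (genericSp k n u v) = algebraMap R₀ 𝕂 (MvPolynomial.X (u, v, m)) := by
  simp [genericSp, genZSp, PowerSeries.coeff_map]

theorem isUnit_det_leadingBlock_genericSp (l : ℕ) :
    IsUnit (leadingBlock ((genericSp k n).submatrix emb0 emb0) l).det := by
  have hconst : ((genericSp k n).submatrix emb0 emb0).map PowerSeries.constantCoeff =
      (Matrix.of fun i j => MvPolynomial.X (emb0 i, emb0 j, 0)).map (algebraMap R₀ 𝕂) := by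
    ext i j
    simp [← PowerSeries.coeff_zero_eq_constantCoeff_apply, coeff_genericSp]
  have hinj : Function.Injective (Function.uncurry fun i j : Fin n => (emb0 i, emb0 j, 0)) := by
    rintro ⟨i, j⟩ ⟨i', j'⟩ h
    simp only [Function.uncurry_apply_pair, Prod.mk.injEq, emb0, Fin.mk.injEq] at h
    simp only [Prod.mk.injEq, Fin.ext_iff]
    omega
  rw [isUnit_det_iff_constantCoeff, map_leadingBlock, hconst, ← map_leadingBlock,
    ← RingHom.mapMatrix_apply, ← RingHom.map_det, isUnit_iff_ne_zero,
    map_ne_zero_iff _ (IsFractionRing.injective _ _)]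
  exact det_leadingBlock_X_ne_zero _ hinj l

theorem exists_isSymplecticMatrix_eq_genericSp :
    ∃ W : Matrix (Fin (2 * n)) (Fin (2 * n)) (PowerSeries 𝕂), IsSymplecticMatrix W ∧
      ∀ u v : Fin (2 * n), v.1 % 2 = 0 → ¬ (u.1 % 2 = 1 ∧ u.1 < v.1) →
        W u v = genericSp k n u v := by
  set A := (genericSp k n).submatrix emb0 emb0
  have hA := isUnit_det_leadingBlock_genericSp k n
  obtain ⟨B, hBG, hAB⟩ := exists_lower_eq_transpose_mul_isSymm A
    ((genericSp k n).submatrix emb1 emb0) hA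
  have hAY : Aᵀ * Aᵀ⁻¹ = 1 :=
    mul_nonsing_inv _ (by rw [det_transpose, ← leadingBlock_of_le A le_rfl]; exact hA n)
  refine ⟨symplecticBlocks A B Aᵀ⁻¹, isSymplecticMatrix_symplecticBlocks A B _ hAB hAY,
    fun u v hv hvu => ?_⟩
  obtain ⟨x, rfl⟩ := parityEquiv.surjective u
  obtain ⟨b | b, rfl⟩ := parityEquiv.surjective v
  · rcases x with a | a
    · simp [A]
    · have hba : b ≤ a := by
        simp only [parityEquiv_inr, parityEquiv_inl, emb0, emb1] at hvu
        rw [Fin.le_def]; omega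
      simp [hBG a b hba]
  · simp [emb1] at hv

end Generic

theorem current_symplectic_ideal_inter_subalgebra_eq_bot_general (k : Type*) [Field k]
    (n : ℕ)
    (p : MvPolynomial (Fin (2 * n) × Fin (2 * n) × ℕ) k)
    (hp : p ∈ Ideal.span {q | ∃ (u v : Fin (2 * n)) (m : ℕ),
      q = PowerSeries.coeff (R := MvPolynomial (Fin (2 * n) × Fin (2 * n) × ℕ) k) m
        (spRelSeries k n u v)})
    (hp' : p ∈ Algebra.adjoin k {q : MvPolynomial (Fin (2 * n) × Fin (2 * n) × ℕ) k |
      ∃ (u v : Fin (2 * n)) (m : ℕ),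
        (v.1 % 2 = 0 ∧ ¬ (u.1 % 2 = 1 ∧ u.1 < v.1)) ∧ q = MvPolynomial.X (u, v, m)}) :
    p = 0 := by
  obtain ⟨W, hW, hWgen⟩ := exists_isSymplecticMatrix_eq_genericSp k n
  have hker : arcEval k W p = 0 := span_spRelSeries_coeff_le_ker_arcEval hW hp
  have hgen : arcEval k W p = algebraMap _ (FractionRing _) p := by
    refine (AlgHom.eqOn_adjoin_iff (ψ := IsScalarTower.toAlgHom k _ _)).2 ?_ hp'
    rintro _ ⟨u, v, m, ⟨hv, hvu⟩, rfl⟩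
    simp [arcEval, hWgen u v hv hvu, coeff_genericSp]
  rwa [hker, eq_comm, map_eq_zero_iff _ (IsFractionRing.injective _ _)] at hgen

/-- the defining ideal of the arc space of `Sp_{2n}` intersects trivially
the polynomial subalgebra generated by the variables `z_{uv}^{(m)}` with `v ∈ {1,…,n}` and
`(u,v)` not of the form `(k̄,l)` with `k < l`. -/
theorem current_symplectic_ideal_inter_subalgebra_eq_bot (k : Type*) [Field k]
    (n : ℕ) (hn : 2 ≤ n)
    (p : MvPolynomial (Fin (2 * n) × Fin (2 * n) × ℕ) k)
    (hp : p ∈ Ideal.span {q | ∃ (u v : Fin (2 * n)) (m : ℕ),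
      q = PowerSeries.coeff (R := MvPolynomial (Fin (2 * n) × Fin (2 * n) × ℕ) k) m
        (spRelSeries k n u v)})
    (hp' : p ∈ Algebra.adjoin k {q : MvPolynomial (Fin (2 * n) × Fin (2 * n) × ℕ) k |
      ∃ (u v : Fin (2 * n)) (m : ℕ),
        (v.1 % 2 = 0 ∧ ¬ (u.1 % 2 = 1 ∧ u.1 < v.1)) ∧ q = MvPolynomial.X (u, v, m)}) :
    p = 0 :=
  current_symplectic_ideal_inter_subalgebra_eq_bot_general k n p hp hp'

end Paper
end
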